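/- arXiv:1609.06068 — 4 statements merged into one kernel-verified Lean document; each statement's English description precedes it below -/
import Mathlib

section
/- Agler's theorem. Let G = (V, E) be a chordal graph on V = {1,…,n} with (i,i) ∈ E for all i, and let C_1, …, C_p be its maximal cliques. Let Z ∈ S^n be a symmetric matrix supported on E (i.e., Z_ij = 0 whenever (i,j) ∉ E). Then Z is positive semidefinite if and only if there exist positive semidefinite matrices Z_k ∈ S^{|C_k|}_+, k = 1,…,p, such that Z = Σ_{k=1}^p E_kᵀ Z_k E_k. -/
open Matrix Finset

/-- A graph (given by its adjacency relation `Adj`) is chordal if every cycle of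
length four or higher (a tuple of pairwise distinct vertices, cyclically
consecutively adjacent) has a chord, i.e. an edge joining two vertices that are
not adjacent in the cycle. -/
def IsChordal {V : Type*} (Adj : V → V → Prop) : Prop :=
  ∀ (k : ℕ) (v : Fin (k + 4) → V), Function.Injective v →
    (∀ i, Adj (v i) (v (i + 1))) →
    ∃ i j, j ≠ i ∧ j ≠ i + 1 ∧ i ≠ j + 1 ∧ Adj (v i) (v j)

/-- A clique: a set of pairwise adjacent vertices. -/
def IsClique {V : Type*} (Adj : V → V → Prop) (s : Finset V) : Prop :=
  ∀ i ∈ s, ∀ j ∈ s, i ≠ j → Adj i j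

/-- A maximal clique: a clique not contained in any strictly larger clique. -/
def IsMaximalClique {V : Type*} (Adj : V → V → Prop) (s : Finset V) : Prop :=
  IsClique Adj s ∧ ∀ t, IsClique Adj t → s ⊆ t → t = s

/-- The selector matrix `E_k` of an index set `s ⊆ {1,…,n}`: the `|s| × n`
matrix with `(E_k)_{ij} = 1` if the `i`-th element of `s` is `j`, else `0`. -/
def selector {n : ℕ} (s : Finset (Fin n)) : Matrix {x // x ∈ s} (Fin n) ℝ :=
  Matrix.of fun i j => if (i : Fin n) = j then 1 else 0


section Graph
variable {n : ℕ} {E : Fin n → Fin n → Prop}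

/-- Reachability inside a finite vertex set `T` via edges of `E`. -/
def Reach (E : Fin n → Fin n → Prop) (T : Finset (Fin n)) (u v : Fin n) : Prop :=
  ∃ m, ∃ w : ℕ → Fin n, w 0 = u ∧ w m = v ∧ (∀ t, t ≤ m → w t ∈ T) ∧
    ∀ t, t < m → E (w t) (w (t + 1))

lemma reach_refl {T : Finset (Fin n)} {u : Fin n} (hu : u ∈ T) : Reach E T u u :=
  ⟨0, fun _ => u, rfl, rfl, fun _ _ => hu, fun _ h => absurd h (Nat.not_lt_zero _)⟩

lemma reach_mem_right {T : Finset (Fin n)} {u v : Fin n} (h : Reach E T u v) : v ∈ T := by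
  obtain ⟨m, w, h0, hm, hT, _⟩ := h
  simpa [hm] using hT m le_rfl

lemma reach_mem_left {T : Finset (Fin n)} {u v : Fin n} (h : Reach E T u v) : u ∈ T := by
  obtain ⟨m, w, h0, hm, hT, _⟩ := h
  simpa [h0] using hT 0 (Nat.zero_le _)

lemma reach_symm (hsym : Symmetric E) {T : Finset (Fin n)} {u v : Fin n}
    (h : Reach E T u v) : Reach E T v u := by
  obtain ⟨m, w, h0, hm, hT, hE⟩ := h
  refine ⟨m, fun t => w (m - t), by simp [hm], by simp [h0], fun t ht => hT _ (by omega), ?_⟩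
  intro t ht
  have h1 : m - t = (m - (t+1)) + 1 := by omega
  have := hE (m - (t+1)) (by omega)
  show E (w (m - t)) (w (m - (t+1)))
  rw [h1]
  exact hsym this

lemma reach_trans {T : Finset (Fin n)} {u v x : Fin n}
    (h1 : Reach E T u v) (h2 : Reach E T v x) : Reach E T u x := by
  obtain ⟨m1, w1, h10, h1m, h1T, h1E⟩ := h1
  obtain ⟨m2, w2, h20, h2m, h2T, h2E⟩ := h2
  refine ⟨m1 + m2, fun t => if t ≤ m1 then w1 t else w2 (t - m1), by simp [h10], ?_, ?_, ?_⟩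
  · by_cases h : m2 = 0
    · subst h
      simpa using h1m.trans (h20.symm.trans h2m)
    · have : ¬ (m1 + m2 ≤ m1) := by omega
      simp only [this, if_false]
      rw [Nat.add_sub_cancel_left]
      exact h2m
  · intro t ht
    by_cases h : t ≤ m1
    · simp [h]; exact h1T t h
    · simp [h]; exact h2T (t - m1) (by omega)
  · intro t ht
    rcases lt_trichotomy t m1 with h | h | h
    · have h' : t + 1 ≤ m1 := by omega
      simp [h.le, h']
      exact h1E t h
    · subst h
      by_cases h2 : m2 = 0
      · omega
      · have : ¬ (t + 1 ≤ t) := by omega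
        simp [this]
        simpa [h1m, ← h20] using h2E 0 (by omega)
    · have : ¬ (t ≤ m1) := by omega
      have h' : ¬ (t + 1 ≤ m1) := by omega
      simp [this, h']
      have h2' : t - m1 + 1 = t + 1 - m1 := by omega
      have := h2E (t - m1) (by omega)
      rwa [h2'] at this

lemma reach_step {T : Finset (Fin n)} {u v x : Fin n}
    (h : Reach E T u v) (hx : x ∈ T) (hE : E v x) : Reach E T u x := by
  refine reach_trans h ⟨1, fun t => if t = 0 then v else x, by simp, by simp, ?_, ?_⟩
  · intro t ht
    interval_cases t
    · simpa using reach_mem_right h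
    · simpa using hx
  · intro t ht
    interval_cases t
    simpa using hE

lemma reach_mono {T T' : Finset (Fin n)} (hT : T ⊆ T') {u v : Fin n}
    (h : Reach E T u v) : Reach E T' u v := by
  obtain ⟨m, w, h0, hm, hTm, hE⟩ := h
  exact ⟨m, w, h0, hm, fun t ht => hT (hTm t ht), hE⟩

end Graph

section Walks
variable {n : ℕ} {E : Fin n → Fin n → Prop}

/-- A walk from `x` to `y` whose `m` interior vertices (positions `1..m`) lie in `P`. -/
def WalkP (E : Fin n → Fin n → Prop) (P : Finset (Fin n)) (x y : Fin n) (m : ℕ)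
    (w : ℕ → Fin n) : Prop :=
  w 0 = x ∧ w (m + 1) = y ∧ (∀ t, 1 ≤ t → t ≤ m → w t ∈ P) ∧
    ∀ t, t ≤ m → E (w t) (w (t + 1))

lemma walk_splice {P : Finset (Fin n)} {x y : Fin n} {m : ℕ} {w : ℕ → Fin n}
    (hw : WalkP E P x y m w) {s t : ℕ} (hst : s + 2 ≤ t) (ht : t ≤ m + 1)
    (hside : 1 ≤ s ∨ t ≤ m) (he : E (w s) (w t)) :
    ∃ m' w', WalkP E P x y m' w' ∧ m' < m := by
  obtain ⟨h0, hlast, hP, hE⟩ := hw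
  set d := t - s - 1 with hd
  have hd1 : 1 ≤ d := by omega
  have hdm : d ≤ m - 1 := by omega
  refine ⟨m - d, fun u => if u ≤ s then w u else w (u + d), ⟨?_, ?_, ?_, ?_⟩, by omega⟩
  · simp [h0]
  · have h1 : ¬ (m - d + 1 ≤ s) := by omega
    simp only [h1, if_false]
    have : m - d + 1 + d = m + 1 := by omega
    rw [this]; exact hlast
  · intro u hu1 hum
    by_cases h : u ≤ s
    · simp only [h, if_true]; exact hP u hu1 (by omega)
    · simp only [h, if_false]; exact hP (u + d) (by omega) (by omega)
  · intro u hum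
    rcases lt_trichotomy u s with h | h | h
    · have h1 : u + 1 ≤ s := by omega
      simp only [h.le, h1, if_true]
      exact hE u (by omega)
    · subst h
      have h1 : ¬ (u + 1 ≤ u) := by omega
      have h2 : u + 1 + d = t := by omega
      simp only [le_refl, if_true, h1, if_false, h2]
      exact he
    · have h1 : ¬ (u ≤ s) := by omega
      have h2 : ¬ (u + 1 ≤ s) := by omega
      simp only [h1, h2, if_false]
      have h3 : u + 1 + d = (u + d) + 1 := by omega
      rw [h3]
      exact hE (u + d) (by omega)

/-- Facts about a minimum-length walk between two distinct non-`P` vertices: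
no chords, and injectivity. -/
lemma minimal_walk_facts {P : Finset (Fin n)} {x y : Fin n} {m : ℕ}
    {w : ℕ → Fin n} (hw : WalkP E P x y m w)
    (hmin : ∀ m' w', WalkP E P x y m' w' → m ≤ m')
    (hxP : x ∉ P) (hyP : y ∉ P) (hxy : x ≠ y) :
    (∀ s t, s + 2 ≤ t → t ≤ m + 1 → (1 ≤ s ∨ t ≤ m) → ¬ E (w s) (w t)) ∧
    (∀ s t, s < t → t ≤ m + 1 → w s ≠ w t) := by
  have hchord : ∀ s t, s + 2 ≤ t → t ≤ m + 1 → (1 ≤ s ∨ t ≤ m) → ¬ E (w s) (w t) := by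
    intro s t h1 h2 h3 he
    obtain ⟨m', w', hw', hlt⟩ := walk_splice hw h1 h2 h3 he
    exact absurd (hmin m' w' hw') (by omega)
  refine ⟨hchord, ?_⟩
  obtain ⟨h0, hlast, hP, hE⟩ := hw
  intro s t hst htm heq
  by_cases hs : s = 0
  · subst hs
    by_cases ht : t = m + 1
    · subst ht; rw [h0, hlast] at heq; exact hxy heq
    · have := hP t (by omega) (by omega)
      rw [← heq, h0] at this; exact hxP this
  · by_cases ht : t = m + 1
    · have := hP s (by omega) (by omega)
      rw [heq, ht, hlast] at this; exact hyP this
    · -- 1 ≤ s < t ≤ m : w s = w t gives chord (s, t+1)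
      have he : E (w s) (w (t + 1)) := heq ▸ hE t (by omega)
      exact hchord s (t + 1) (by omega) (by omega) (Or.inl (by omega)) he

end Walks

section Cycle
variable {n : ℕ} {E : Fin n → Fin n → Prop}

/-- If `x, y` can be joined by a walk with interior in `A` and by a walk with
interior in `B`, where `A, B` are disjoint, have no edges between them and do
not contain `x, y`, then chordality forces the edge `x y`. -/
lemma edge_of_two_walks (hsym : Symmetric E) (hch : IsChordal E)
    {A B : Finset (Fin n)} {x y : Fin n}
    (hAB : ∀ c ∈ A, ∀ d ∈ B, ¬ E c d)
    (hABd : ∀ c, ¬(c ∈ A ∧ c ∈ B))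
    (hxA : x ∉ A) (hyA : y ∉ A) (hxB : x ∉ B) (hyB : y ∉ B) (hxy : x ≠ y)
    (hwA : ∃ m w, WalkP E A x y m w) (hwB : ∃ m w, WalkP E B y x m w) :
    E x y := by
  classical
  by_contra hexy
  -- minimal walks
  obtain ⟨mA, wA, hwa, hminA⟩ : ∃ m w, WalkP E A x y m w ∧
      ∀ m' w', WalkP E A x y m' w' → m ≤ m' := by
    obtain ⟨w, hw⟩ := Nat.find_spec hwA
    exact ⟨_, w, hw, fun m' w' h => Nat.find_min' hwA ⟨w', h⟩⟩
  obtain ⟨mB, wB, hwb, hminB⟩ : ∃ m w, WalkP E B y x m w ∧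
      ∀ m' w', WalkP E B y x m' w' → m ≤ m' := by
    obtain ⟨w, hw⟩ := Nat.find_spec hwB
    exact ⟨_, w, hw, fun m' w' h => Nat.find_min' hwB ⟨w', h⟩⟩
  obtain ⟨chordA, injA⟩ := minimal_walk_facts (E := E) hwa hminA hxA hyA hxy
  obtain ⟨chordB, injB⟩ := minimal_walk_facts (E := E) hwb hminB hyB hxB hxy.symm
  obtain ⟨ha0, haL, haP, haE⟩ := hwa
  obtain ⟨hb0, hbL, hbP, hbE⟩ := hwb
  have h1A : 1 ≤ mA := by
    by_contra h
    have h0 : mA = 0 := by omega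
    have hE0 := haE 0 (by omega)
    rw [ha0] at hE0
    rw [h0] at haL
    exact hexy (haL ▸ hE0)
  have h1B : 1 ≤ mB := by
    by_contra h
    have h0 : mB = 0 := by omega
    have hE0 := hbE 0 (by omega)
    rw [hb0] at hE0
    rw [h0] at hbL
    exact hexy (hsym (hbL ▸ hE0))
  set M := mA + mB + 2 with hM
  set c : ℕ → Fin n := fun t => if t ≤ mA + 1 then wA t else wB (t - (mA + 1)) with hc
  have hcA : ∀ t, t ≤ mA + 1 → c t = wA t := fun t ht => by simp [hc, ht]
  have hcB : ∀ t, mA + 1 ≤ t → c t = wB (t - (mA + 1)) := by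
    intro t ht
    rcases eq_or_lt_of_le ht with h | h
    · rw [← h]
      simp only [hc, le_refl, if_true, Nat.sub_self]
      rw [haL, hb0]
    · have : ¬ (t ≤ mA + 1) := by omega
      simp [hc, this]
  have hc0 : c 0 = x := by rw [hcA 0 (by omega), ha0]
  have hcy : c (mA + 1) = y := by rw [hcA _ le_rfl, haL]
  have hintA : ∀ t, 1 ≤ t → t ≤ mA → c t ∈ A := fun t h1 h2 => by
    rw [hcA t (by omega)]; exact haP t h1 h2
  have hintB : ∀ t, mA + 2 ≤ t → t ≤ M - 1 → c t ∈ B := fun t h1 h2 => by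
    rw [hcB t (by omega)]; exact hbP _ (by omega) (by omega)
  -- adjacency around the cycle
  have hadj : ∀ t, t ≤ M - 2 → E (c t) (c (t + 1)) := by
    intro t ht
    by_cases h : t ≤ mA
    · rw [hcA t (by omega), hcA (t + 1) (by omega)]
      exact haE t h
    · rw [hcB t (by omega), hcB (t + 1) (by omega)]
      have : t + 1 - (mA + 1) = (t - (mA + 1)) + 1 := by omega
      rw [this]
      exact hbE _ (by omega)
  have hwrap : E (c (M - 1)) (c 0) := by
    rw [hc0, hcB (M - 1) (by omega)]
    have : M - 1 - (mA + 1) = mB := by omega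
    rw [this]
    have := hbE mB le_rfl
    rwa [hbL] at this
  -- injectivity of c on [0, M-1]
  have hinj : ∀ s t, s < t → t ≤ M - 1 → c s ≠ c t := by
    intro s t hst htM
    by_cases ht : t ≤ mA + 1
    · rw [hcA s (by omega), hcA t ht]
      exact injA s t hst ht
    · by_cases hs : mA + 1 ≤ s
      · rw [hcB s hs, hcB t (by omega)]
        exact injB _ _ (by omega) (by omega)
      · -- s ≤ mA, t ≥ mA + 2 : c t ∈ B
        have hctB : c t ∈ B := hintB t (by omega) htM
        by_cases hs0 : s = 0
        · subst hs0
          rw [hc0]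
          intro h
          exact hxB (h ▸ hctB)
        · have hcsA : c s ∈ A := hintA s (by omega) (by omega)
          intro h
          exact hABd (c t) ⟨h ▸ hcsA, hctB⟩
  -- no chords around the cycle
  have hnochord : ∀ s t, s + 2 ≤ t → t ≤ M - 1 → ¬(s = 0 ∧ t = M - 1) →
      ¬ E (c s) (c t) := by
    intro s t hst htM hne
    by_cases ht : t ≤ mA + 1
    · by_cases h0 : s = 0 ∧ t = mA + 1
      · rw [h0.1, h0.2, hc0, hcy]
        exact hexy
      · rw [hcA s (by omega), hcA t ht]
        exact chordA s t hst ht (by omega)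
    · by_cases hs : mA + 1 ≤ s
      · rw [hcB s hs, hcB t (by omega)]
        exact chordB _ _ (by omega) (by omega) (by omega)
    -- s ≤ mA, t ≥ mA + 2
      · have ht' : t - (mA + 1) ≤ mB := by omega
        by_cases hs0 : s = 0
        · subst hs0
          rw [hc0, hcB t (by omega)]
          have htmB : t - (mA + 1) ≤ mB - 1 := by omega
          intro h
          have := chordB (t - (mA + 1)) (mB + 1) (by omega) (by omega) (by omega)
          rw [hbL] at this
          exact this (hsym h)
        · rw [hcB t (by omega)]
          exact hAB _ (hintA s (by omega) (by omega)) _ (hbP _ (by omega) (by omega))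
  -- apply chordality
  have hMk : M = (mA + mB - 2) + 4 := by omega
  set k := mA + mB - 2 with hk
  set v : Fin (k + 4) → Fin n := fun i => c i.val with hv
  have hval : ∀ i : Fin (k + 4), ((i + 1 : Fin (k + 4))).val = (i.val + 1) % (k + 4) := by
    intro i
    rw [Fin.val_add]
    congr 1
  have hvinj : Function.Injective v := by
    intro i j hij
    by_contra hne
    have hij' : i.val ≠ j.val := fun h => hne (Fin.ext h)
    have hiM : i.val ≤ M - 1 := by have := i.isLt; omega
    have hjM : j.val ≤ M - 1 := by have := j.isLt; omega
    rcases lt_or_gt_of_ne hij' with h | h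
    · exact hinj i.val j.val h hjM hij
    · exact hinj j.val i.val h hiM hij.symm
  have hvadj : ∀ i, E (v i) (v (i + 1)) := by
    intro i
    show E (c i.val) (c ((i + 1 : Fin (k + 4))).val)
    rw [hval i]
    by_cases h : i.val = M - 1
    · have : (i.val + 1) % (k + 4) = 0 := by
        rw [h]; have : M - 1 + 1 = k + 4 := by omega
        rw [this, Nat.mod_self]
      rw [this, h]
      exact hwrap
    · have hlt : i.val + 1 < k + 4 := by have := i.isLt; omega
      rw [Nat.mod_eq_of_lt hlt]
      exact hadj i.val (by have := i.isLt; omega)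
  obtain ⟨i, j, hji, hji1, hij1, hEij⟩ := hch k v hvinj hvadj
  have hij' : i.val ≠ j.val := fun h => hji (Fin.ext h).symm
  have hb1 : j.val ≠ (i.val + 1) % (k + 4) := by
    intro h
    exact hji1 (Fin.ext (h.trans (hval i).symm))
  have ha1 : i.val ≠ (j.val + 1) % (k + 4) := by
    intro h
    exact hij1 (Fin.ext (h.trans (hval j).symm))
  have hiM := i.isLt
  have hjM := j.isLt
  rcases lt_or_gt_of_ne hij' with h | h
  · -- i.val < j.val
    have hgap : i.val + 2 ≤ j.val := by
      rcases Nat.lt_or_ge (i.val + 1) (k + 4) with h' | h'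
      · rw [Nat.mod_eq_of_lt h'] at hb1; omega
      · omega
    have hcorner : ¬(i.val = 0 ∧ j.val = M - 1) := by
      rintro ⟨h0, hL⟩
      apply ha1
      rw [h0, hL]
      have : M - 1 + 1 = k + 4 := by omega
      rw [this, Nat.mod_self]
    exact hnochord i.val j.val hgap (by omega) hcorner hEij
  · have hgap : j.val + 2 ≤ i.val := by
      rcases Nat.lt_or_ge (j.val + 1) (k + 4) with h' | h'
      · rw [Nat.mod_eq_of_lt h'] at ha1; omega
      · omega
    have hcorner : ¬(j.val = 0 ∧ i.val = M - 1) := by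
      rintro ⟨h0, hL⟩
      apply hb1
      rw [h0, hL]
      have : M - 1 + 1 = k + 4 := by omega
      rw [this, Nat.mod_self]
    exact hnochord j.val i.val hgap (by omega) hcorner (hsym hEij)

end Cycle

section Simplicial
variable {n : ℕ} {E : Fin n → Fin n → Prop}

/-- `v` is a simplicial vertex of the subgraph induced on `S`: its neighbours
in `S` are pairwise adjacent. -/
def Simp (E : Fin n → Fin n → Prop) (S : Finset (Fin n)) (v : Fin n) : Prop :=
  ∀ a ∈ S, ∀ b ∈ S, E v a → E v b → a ≠ v → b ≠ v → a ≠ b → E a b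

lemma exists_simplicial (hsym : Symmetric E) (hrefl : ∀ i, E i i) (hch : IsChordal E) :
    ∀ (N : ℕ) (S : Finset (Fin n)), S.card ≤ N → S.Nonempty →
      (∃ v ∈ S, Simp E S v) ∧
      ((∃ a ∈ S, ∃ b ∈ S, a ≠ b ∧ ¬ E a b) →
        ∃ u ∈ S, ∃ w ∈ S, u ≠ w ∧ ¬ E u w ∧ Simp E S u ∧ Simp E S w) := by
  classical
  intro N
  induction N with
  | zero =>
    intro S hcard hS
    obtain ⟨v, hv⟩ := hS
    simp [Finset.card_eq_zero.mp (Nat.le_zero.mp hcard)] at hv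
  | succ N ih =>
    intro S hcard hS
    by_cases hcomp : ∀ c ∈ S, ∀ d ∈ S, c ≠ d → E c d
    · refine ⟨?_, ?_⟩
      · obtain ⟨v, hv⟩ := hS
        exact ⟨v, hv, fun c hc d hd _ _ _ _ hcd => hcomp c hc d hd hcd⟩
      · rintro ⟨c, hc, d, hd, hcd, hnE⟩
        exact absurd (hcomp c hc d hd hcd) hnE
    · push_neg at hcomp
      obtain ⟨a, ha, b, hb, hab, hnE⟩ := hcomp
      -- a trivial separator
      have hsep0 : ¬ Reach E (S \ (S \ {a, b})) a b := by
        rintro ⟨m, w, h0, hm, hT, hE⟩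
        have key : ∀ t, t ≤ m → w t = a := by
          intro t
          induction t with
          | zero => intro _; exact h0
          | succ t iht =>
            intro htm
            have hwt := iht (by omega)
            have hadj := hE t (by omega)
            rw [hwt] at hadj
            have hmem := hT (t + 1) (by omega)
            simp only [Finset.mem_sdiff, Finset.mem_insert, Finset.mem_singleton, not_and,
              not_not] at hmem
            rcases hmem.2 hmem.1 with h | h
            · exact h
            · rw [h] at hadj; exact absurd hadj hnE
        have := key m le_rfl
        rw [hm] at this
        exact hab this.symm
      -- minimum-cardinality separator F₀
      obtain ⟨F₀, hF₀P, hF₀min⟩ := Finset.exists_min_image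
        ((S \ {a, b}).powerset.filter (fun F => ¬ Reach E (S \ F) a b)) Finset.card
        ⟨S \ {a, b}, by simp only [Finset.mem_filter, Finset.mem_powerset]; exact ⟨le_rfl, hsep0⟩⟩
      rw [Finset.mem_filter, Finset.mem_powerset] at hF₀P
      obtain ⟨hF₀sub, hF₀sep⟩ := hF₀P
      have haF₀ : a ∉ F₀ := fun h => by simpa using (hF₀sub h)
      have hbF₀ : b ∉ F₀ := fun h => by simpa using (hF₀sub h)
      have hF₀S : F₀ ⊆ S := hF₀sub.trans (Finset.sdiff_subset)
      set T : Finset (Fin n) := S \ F₀ with hT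
      have haT : a ∈ T := Finset.mem_sdiff.mpr ⟨ha, haF₀⟩
      have hbT : b ∈ T := Finset.mem_sdiff.mpr ⟨hb, hbF₀⟩
      set A : Finset (Fin n) := T.filter (Reach E T a) with hA
      set B : Finset (Fin n) := T.filter (Reach E T b) with hB
      have hAsub : A ⊆ T := Finset.filter_subset _ _
      have hBsub : B ⊆ T := Finset.filter_subset _ _
      have haA : a ∈ A := Finset.mem_filter.mpr ⟨haT, reach_refl haT⟩
      have hbB : b ∈ B := Finset.mem_filter.mpr ⟨hbT, reach_refl hbT⟩
      have hclosedA : ∀ c ∈ A, ∀ d ∈ T, E c d → d ∈ A := by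
        intro c hc d hd hE
        exact Finset.mem_filter.mpr ⟨hd, reach_step (Finset.mem_filter.mp hc).2 hd hE⟩
      have hclosedB : ∀ c ∈ B, ∀ d ∈ T, E c d → d ∈ B := by
        intro c hc d hd hE
        exact Finset.mem_filter.mpr ⟨hd, reach_step (Finset.mem_filter.mp hc).2 hd hE⟩
      have hABd : ∀ c, ¬ (c ∈ A ∧ c ∈ B) := by
        rintro c ⟨hcA, hcB⟩
        exact hF₀sep (reach_trans (Finset.mem_filter.mp hcA).2
          (reach_symm hsym (Finset.mem_filter.mp hcB).2))
      have hnoAB : ∀ c ∈ A, ∀ d ∈ B, ¬ E c d := by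
        intro c hc d hd hE
        exact hABd d ⟨hclosedA c hc d (hBsub hd) hE, hd⟩
      -- every separator vertex has a neighbour in the component of r
      have nbr_gen : ∀ (r : Fin n), r ∈ T → ∀ x ∈ F₀,
          ¬ (∃ c ∈ T.filter (Reach E T r), E x c) →
          ∀ u, Reach E (S \ (F₀.erase x)) r u → u ∈ T.filter (Reach E T r) := by
        intro r hrT x hxF hno u hu
        obtain ⟨m, w, h0, hm, hTm, hE⟩ := hu
        have key : ∀ t, t ≤ m → w t ∈ T.filter (Reach E T r) := by
          intro t
          induction t with
          | zero =>
            intro _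
            rw [h0]
            exact Finset.mem_filter.mpr ⟨hrT, reach_refl hrT⟩
          | succ t iht =>
            intro htm
            have hwt := iht (by omega)
            have hadj := hE t (by omega)
            have hmem := hTm (t + 1) (by omega)
            rw [Finset.mem_sdiff, Finset.mem_erase] at hmem
            by_cases hx : w (t + 1) = x
            · exfalso
              apply hno
              refine ⟨w t, hwt, ?_⟩
              rw [← hx]
              exact hsym hadj
            · have hwT : w (t + 1) ∈ T := by
                rw [hT, Finset.mem_sdiff]
                refine ⟨hmem.1, fun hF => ?_⟩
                exact hmem.2 ⟨hx, hF⟩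
              exact Finset.mem_filter.mpr ⟨hwT,
                reach_step (Finset.mem_filter.mp hwt).2 hwT hadj⟩
        rw [← hm]
        exact key m le_rfl
      have hsep_erase : ∀ x ∈ F₀, (∀ r ∈ ({a, b} : Finset (Fin n)), True) → True := fun _ _ _ => trivial
      have hnbr : ∀ (r : Fin n), r ∈ T →
          (Reach E T a b → False) →
          True := fun _ _ _ => trivial
      -- neighbour in A
      have hnbrA : ∀ x ∈ F₀, ∃ c ∈ A, E x c := by
        intro x hx
        by_contra hno
        have hsep' : ¬ Reach E (S \ F₀.erase x) a b := by
          intro hr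
          have hbA : b ∈ A := by
            rw [hA]
            exact nbr_gen a haT x hx (by rwa [← hA]) b hr
          exact hF₀sep (Finset.mem_filter.mp hbA).2
        have hmem' : F₀.erase x ∈ (S \ {a, b}).powerset.filter
            (fun F => ¬ Reach E (S \ F) a b) := by
          rw [Finset.mem_filter, Finset.mem_powerset]
          exact ⟨(Finset.erase_subset _ _).trans hF₀sub, hsep'⟩
        have := hF₀min _ hmem'
        have hltc : (F₀.erase x).card < F₀.card := Finset.card_erase_lt_of_mem hx
        omega
      -- neighbour in B
      have hnbrB : ∀ x ∈ F₀, ∃ c ∈ B, E x c := by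
        intro x hx
        by_contra hno
        have hsep' : ¬ Reach E (S \ F₀.erase x) a b := by
          intro hr
          have haB : a ∈ B := by
            rw [hB]
            exact nbr_gen b hbT x hx (by rwa [← hB]) a (reach_symm hsym hr)
          exact hF₀sep (reach_symm hsym (Finset.mem_filter.mp haB).2)
        have hmem' : F₀.erase x ∈ (S \ {a, b}).powerset.filter
            (fun F => ¬ Reach E (S \ F) a b) := by
          rw [Finset.mem_filter, Finset.mem_powerset]
          exact ⟨(Finset.erase_subset _ _).trans hF₀sub, hsep'⟩
        have := hF₀min _ hmem'
        have hltc : (F₀.erase x).card < F₀.card := Finset.card_erase_lt_of_mem hx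
        omega
      -- upgrade reach in T to reach in a component
      have reach_upgrade : ∀ (R : Finset (Fin n)), (∀ c ∈ R, ∀ d ∈ T, E c d → d ∈ R) →
          ∀ u v : Fin n, u ∈ R → Reach E T u v → Reach E R u v := by
        rintro R hcl u v huR ⟨m, w, h0, hm, hTm, hE⟩
        have hall : ∀ t, t ≤ m → w t ∈ R := by
          intro t
          induction t with
          | zero => intro _; rw [h0]; exact huR
          | succ t iht =>
            intro htm
            exact hcl _ (iht (by omega)) _ (hTm (t + 1) (by omega)) (hE t (by omega))
        exact ⟨m, w, h0, hm, hall, hE⟩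
      -- walks between separator vertices through the components
      have hwalk : ∀ (R : Finset (Fin n)) (r : Fin n), r ∈ T →
          (∀ c ∈ R, ∀ d ∈ T, E c d → d ∈ R) → R = T.filter (Reach E T r) →
          ∀ x y : Fin n, (∃ c ∈ R, E x c) → (∃ d ∈ R, E y d) →
          ∃ m w, WalkP E R x y m w := by
        intro R r hrT hcl hR x y hxc hyd
        obtain ⟨c, hcR, hxc⟩ := hxc
        obtain ⟨d, hdR, hyd⟩ := hyd
        have hcd : Reach E T c d := by
          have h1 : Reach E T r c := by
            have := Finset.mem_filter.mp (hR ▸ hcR); exact this.2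
          have h2 : Reach E T r d := by
            have := Finset.mem_filter.mp (hR ▸ hdR); exact this.2
          exact reach_trans (reach_symm hsym h1) h2
        obtain ⟨m, w, h0, hm, hRm, hE⟩ := reach_upgrade R hcl c d hcR hcd
        refine ⟨m + 1, fun t => if t = 0 then x else if t ≤ m + 1 then w (t - 1) else y,
          ?_, ?_, ?_, ?_⟩
        · simp
        · have h1 : ¬ (m + 1 + 1 = 0) := by omega
          have h2 : ¬ (m + 1 + 1 ≤ m + 1) := by omega
          simp [h1, h2]
        · intro t ht1 htm
          have h1 : ¬ (t = 0) := by omega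
          have h2 : t ≤ m + 1 := by omega
          simp only [h1, if_false, h2, if_true]
          exact hRm (t - 1) (by omega)
        · intro t htm
          by_cases h0' : t = 0
          · subst h0'
            simp only [if_true, one_ne_zero, if_false]
            have : (1 : ℕ) ≤ m + 1 := by omega
            simp only [this, if_true]
            have : w (1 - 1) = c := h0
            rw [this]
            exact hxc
          · by_cases h1' : t ≤ m
            · have e1 : ¬ (t + 1 = 0) := by omega
              have e2 : t + 1 ≤ m + 1 := by omega
              have e3 : t ≤ m + 1 := by omega
              simp only [h0', if_false, e3, if_true, e1, e2]
              have : t - 1 + 1 = t + 1 - 1 := by omega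
              have h := hE (t - 1) (by omega)
              rwa [this] at h
            · have ht : t = m + 1 := by omega
              subst ht
              have e1 : ¬ (m + 1 = 0) := by omega
              have e2 : (m + 1 : ℕ) ≤ m + 1 := le_rfl
              have e3 : ¬ (m + 1 + 1 = 0) := by omega
              have e4 : ¬ (m + 1 + 1 ≤ m + 1) := by omega
              simp only [e1, if_false, e2, if_true, e3, e4]
              have : w (m + 1 - 1) = d := by
                have : m + 1 - 1 = m := by omega
                rw [this, hm]
              rw [this]
              exact hsym hyd
      -- F₀ is a clique
      have hclique : ∀ x ∈ F₀, ∀ y ∈ F₀, x ≠ y → E x y := by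
        intro x hx y hy hne
        have hxT : x ∉ T := by rw [hT]; simp [Finset.mem_sdiff, hx, hF₀S hx]
        have hyT : y ∉ T := by rw [hT]; simp [Finset.mem_sdiff, hy, hF₀S hy]
        exact edge_of_two_walks hsym hch hnoAB hABd
          (fun h => hxT (hAsub h)) (fun h => hyT (hAsub h))
          (fun h => hxT (hBsub h)) (fun h => hyT (hBsub h)) hne
          (hwalk A a haT hclosedA rfl x y (hnbrA x hx) (hnbrA y hy))
          (hwalk B b hbT hclosedB rfl y x (hnbrB y hy) (hnbrB x hx))
      -- recurse on each side
      have side : ∀ (R : Finset (Fin n)) (r e : Fin n), r ∈ R → e ∈ S → e ∉ R → e ∉ F₀ →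
          R ⊆ T → (∀ c ∈ R, ∀ d ∈ T, E c d → d ∈ R) →
          ∃ v ∈ R, Simp E S v := by
        intro R r e hrR heS heR heF hRT hcl
        have hRS : R ∪ F₀ ⊆ S := by
          intro z hz
          rcases Finset.mem_union.mp hz with h | h
          · exact (Finset.sdiff_subset) (hRT h)
          · exact hF₀S h
        have hcard₁ : (R ∪ F₀).card ≤ N := by
          have hsub : R ∪ F₀ ⊆ S.erase e := by
            intro z hz
            rw [Finset.mem_erase]
            refine ⟨?_, hRS hz⟩
            rintro rfl
            rcases Finset.mem_union.mp hz with h | h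
            · exact heR h
            · exact heF h
          have := Finset.card_le_card hsub
          have := Finset.card_erase_of_mem heS
          omega
        have hne₁ : (R ∪ F₀).Nonempty := ⟨r, Finset.mem_union_left _ hrR⟩
        have hvex : ∃ v ∈ R, Simp E (R ∪ F₀) v := by
          by_cases hcomp₁ : ∀ c ∈ R ∪ F₀, ∀ d ∈ R ∪ F₀, c ≠ d → E c d
          · exact ⟨r, hrR, fun c hc d hd _ _ _ _ hcd => hcomp₁ c hc d hd hcd⟩
          · push_neg at hcomp₁
            obtain ⟨u, hu, w, hw, hune, hunE, hsu, hsw⟩ :=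
              (ih (R ∪ F₀) hcard₁ hne₁).2 (by
                obtain ⟨c, hc, d, hd, hcd, hnE'⟩ := hcomp₁
                exact ⟨c, hc, d, hd, hcd, hnE'⟩)
            rcases Finset.mem_union.mp hu with huR | huF
            · exact ⟨u, huR, hsu⟩
            · rcases Finset.mem_union.mp hw with hwR | hwF
              · exact ⟨w, hwR, hsw⟩
              · exact absurd (hclique u huF w hwF hune) hunE
        obtain ⟨v, hvR, hvS₁⟩ := hvex
        refine ⟨v, hvR, ?_⟩
        have hmem : ∀ z, z ∈ S → E v z → z ≠ v → z ∈ R ∪ F₀ := by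
          intro z hzS hEz hzv
          by_cases hF : z ∈ F₀
          · exact Finset.mem_union_right _ hF
          · have hzT : z ∈ T := Finset.mem_sdiff.mpr ⟨hzS, hF⟩
            exact Finset.mem_union_left _ (hcl v hvR z hzT hEz)
        intro c hc d hd hEc hEd hcv hdv hcd
        exact hvS₁ c (hmem c hc hEc hcv) d (hmem d hd hEd hdv) hEc hEd hcv hdv hcd
      have hbA : b ∉ A := fun h => hABd b ⟨h, hbB⟩
      have haB : a ∉ B := fun h => hABd a ⟨haA, h⟩
      obtain ⟨vA, hvA, hSA⟩ := side A a b haA hb hbA hbF₀ hAsub hclosedA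
      obtain ⟨vB, hvB, hSB⟩ := side B b a hbB ha haB haF₀ hBsub hclosedB
      have hnAB : ¬ E vA vB := hnoAB vA hvA vB hvB
      have hneAB : vA ≠ vB := by
        rintro rfl
        exact hnAB (hrefl vA)
      have hvAS : vA ∈ S := (Finset.sdiff_subset) (hAsub hvA)
      have hvBS : vB ∈ S := (Finset.sdiff_subset) (hBsub hvB)
      exact ⟨⟨vA, hvAS, hSA⟩, fun _ => ⟨vA, hvAS, vB, hvBS, hneAB, hnAB, hSA, hSB⟩⟩

end Simplicial

section MatrixLemmas
variable {n : ℕ}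

lemma selector_conjTranspose (s : Finset (Fin n)) : (selector s)ᴴ = (selector s)ᵀ := by
  ext i j
  simp [Matrix.conjTranspose_apply]

lemma selector_transpose_mul (s : Finset (Fin n)) :
    (selector s)ᵀ * selector s =
      Matrix.diagonal (fun i => if i ∈ s then (1 : ℝ) else 0) := by
  ext i j
  simp only [Matrix.mul_apply, Matrix.transpose_apply, selector, Matrix.of_apply]
  have hterm : ∀ a : {x // x ∈ s},
      (if (a : Fin n) = i then (1 : ℝ) else 0) * (if (a : Fin n) = j then 1 else 0)
        = if (a : Fin n) = i then (if i = j then 1 else 0) else 0 := by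
    intro a
    split_ifs with h1 h2 h3 h3 <;> simp_all
  rw [Finset.sum_congr rfl fun a _ => hterm a]
  by_cases hi : i ∈ s
  · rw [Finset.sum_eq_single ⟨i, hi⟩]
    · simp [Matrix.diagonal, hi, eq_comm]
    · intro b _ hb
      have : (b : Fin n) ≠ i := fun h => hb (Subtype.ext h)
      simp [this]
    · intro h
      exact absurd (Finset.mem_univ _) h
  · have : ∀ a : {x // x ∈ s}, (a : Fin n) ≠ i := by
      rintro a rfl
      exact hi a.2
    rw [Finset.sum_eq_zero fun a _ => by simp [this a]]
    rw [Matrix.diagonal_apply]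
    by_cases h : i = j
    · subst h; simp [hi]
    · simp [h]

lemma compress_expand {s : Finset (Fin n)} {M : Matrix (Fin n) (Fin n) ℝ}
    (hsupp : ∀ i j, M i j ≠ 0 → i ∈ s ∧ j ∈ s) :
    (selector s)ᵀ * (selector s * M * (selector s)ᵀ) * selector s = M := by
  have h1 : (selector s)ᵀ * (selector s * M * (selector s)ᵀ) * selector s
      = ((selector s)ᵀ * selector s) * M * ((selector s)ᵀ * selector s) := by
    simp only [Matrix.mul_assoc]
  rw [h1, selector_transpose_mul]
  ext i j
  rw [Matrix.mul_diagonal, Matrix.diagonal_mul]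
  by_cases h : M i j = 0
  · simp [h]
  · obtain ⟨hi, hj⟩ := hsupp i j h
    simp [hi, hj]

end MatrixLemmas

section Quadratic
variable {n : ℕ}

lemma psd_quad_aux {Z : Matrix (Fin n) (Fin n) ℝ} (hZ : Z.PosSemidef) (v : Fin n)
    (x : Fin n → ℝ) (t : ℝ) :
    0 ≤ x ⬝ᵥ Z *ᵥ x + 2 * t * (Z *ᵥ x) v + t ^ 2 * Z v v := by
  have hsymm : ∀ i j, Z i j = Z j i := by
    intro i j
    rw [← hZ.1.apply j i]; simp
  have h := hZ.dotProduct_mulVec_nonneg (x + t • (Pi.single v 1 : Fin n → ℝ))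
  have hstar : star (x + t • (Pi.single v 1 : Fin n → ℝ))
      = x + t • (Pi.single v 1 : Fin n → ℝ) := by simp
  rw [hstar] at h
  rw [Matrix.mulVec_add, Matrix.mulVec_smul, dotProduct_add, add_dotProduct,
    add_dotProduct, dotProduct_smul, smul_dotProduct,
    smul_dotProduct, dotProduct_smul] at h
  have h1 : (Pi.single v 1 : Fin n → ℝ) ⬝ᵥ Z *ᵥ x = (Z *ᵥ x) v := by
    simp [single_dotProduct]
  have h2 : x ⬝ᵥ Z *ᵥ (Pi.single v 1 : Fin n → ℝ) = (Z *ᵥ x) v := by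
    rw [Matrix.mulVec_single]
    show (∑ i, x i * (Z i v * 1)) = (Z *ᵥ x) v
    have : (Z *ᵥ x) v = ∑ j, Z v j * x j := by simp [Matrix.mulVec, dotProduct]
    rw [this]
    apply Finset.sum_congr rfl
    intro i _
    rw [hsymm v i]; ring
  have h3 : (Pi.single v 1 : Fin n → ℝ) ⬝ᵥ Z *ᵥ (Pi.single v 1 : Fin n → ℝ) = Z v v := by
    rw [Matrix.mulVec_single]
    simp [single_dotProduct]
  rw [h1, h2, h3] at h
  simp only [smul_eq_mul] at h
  nlinarith [h]

lemma psd_diag_nonneg {Z : Matrix (Fin n) (Fin n) ℝ} (hZ : Z.PosSemidef) (v : Fin n) :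
    0 ≤ Z v v := by
  have h := hZ.dotProduct_mulVec_nonneg (Pi.single v 1)
  have hstar : star (Pi.single v 1 : Fin n → ℝ) = Pi.single v 1 := by simp
  rw [hstar] at h
  rw [Matrix.mulVec_single, single_dotProduct, one_mul] at h
  simpa using h

lemma psd_row_zero {Z : Matrix (Fin n) (Fin n) ℝ} (hZ : Z.PosSemidef) (v : Fin n)
    (hvv : Z v v = 0) (i : Fin n) : Z v i = 0 := by
  by_contra hne
  have h := psd_quad_aux hZ v (Pi.single i 1)
  have h1 : (Pi.single i 1 : Fin n → ℝ) ⬝ᵥ Z *ᵥ (Pi.single i 1) = Z i i := by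
    rw [Matrix.mulVec_single, single_dotProduct]; simp
  have h2 : (Z *ᵥ (Pi.single i 1 : Fin n → ℝ)) v = Z v i := by
    rw [Matrix.mulVec_single]; simp
  have h' := h (-(Z i i + 1) / (2 * Z v i))
  rw [h1, h2, hvv] at h'
  have hne2 : (2 : ℝ) * Z v i ≠ 0 := by
    intro hc
    apply hne
    linarith [hc]
  have : 2 * (-(Z i i + 1) / (2 * Z v i)) * Z v i = -(Z i i + 1) := by
    field_simp
  rw [this] at h'
  simp at h'
  linarith [h']

end Quadratic

section Schur
variable {n : ℕ}

lemma schur_decomp {Z : Matrix (Fin n) (Fin n) ℝ} (hZ : Z.PosSemidef) (v : Fin n)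
    (hvv : 0 < Z v v) :
    (Matrix.of fun i j => Z i v * Z v j / Z v v : Matrix (Fin n) (Fin n) ℝ).PosSemidef ∧
    (Z - Matrix.of fun i j => Z i v * Z v j / Z v v).PosSemidef := by
  have hsymm : ∀ i j, Z i j = Z j i := fun i j => by rw [← hZ.1.apply j i]; simp
  set Zv : Matrix (Fin n) (Fin n) ℝ := Matrix.of fun i j => Z i v * Z v j / Z v v with hZv
  have hherm : Zv.IsHermitian := by
    ext i j
    simp only [Matrix.conjTranspose_apply, hZv, Matrix.of_apply, star_trivial]
    rw [hsymm j v, hsymm v i]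
    ring
  have hquad : ∀ x : Fin n → ℝ, x ⬝ᵥ Zv *ᵥ x = (Z *ᵥ x) v * (Z *ᵥ x) v / Z v v := by
    intro x
    have hc : (Z *ᵥ x) v = ∑ j, Z v j * x j := by simp [Matrix.mulVec, dotProduct]
    have hmv : ∀ i, (Zv *ᵥ x) i = Z i v * (Z *ᵥ x) v / Z v v := by
      intro i
      show (∑ j, Zv i j * x j) = _
      have hterm : ∀ j, Zv i j * x j = (Z i v / Z v v) * (Z v j * x j) := by
        intro j
        simp only [hZv, Matrix.of_apply]
        ring
      rw [Finset.sum_congr rfl fun j _ => hterm j, ← Finset.mul_sum, ← hc]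
      ring
    show (∑ i, x i * (Zv *ᵥ x) i) = _
    have hterm : ∀ i, x i * (Zv *ᵥ x) i = ((Z *ᵥ x) v / Z v v) * (Z v i * x i) := by
      intro i
      rw [hmv i, hsymm v i]
      ring
    rw [Finset.sum_congr rfl fun i _ => hterm i, ← Finset.mul_sum, ← hc]
    ring
  constructor
  · refine .of_dotProduct_mulVec_nonneg hherm (fun x => ?_)
    have hstar : star x = x := by simp
    rw [hstar, hquad]
    exact div_nonneg (mul_self_nonneg _) hvv.le
  · refine .of_dotProduct_mulVec_nonneg (hZ.1.sub hherm) (fun x => ?_)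
    have hstar : star x = x := by simp
    rw [hstar, Matrix.sub_mulVec, dotProduct_sub, hquad]
    have h := psd_quad_aux hZ v x (-((Z *ᵥ x) v / Z v v))
    have hvv' : Z v v ≠ 0 := ne_of_gt hvv
    set c := (Z *ᵥ x) v with hcc
    set q := x ⬝ᵥ Z *ᵥ x with hqq
    have e1 : 2 * (-(c / Z v v)) * c + (-(c / Z v v)) ^ 2 * Z v v = -(c * c / Z v v) := by
      field_simp
      ring
    nlinarith [h, e1]

end Schur

section Cliques
variable {n : ℕ} {E : Fin n → Fin n → Prop}

lemma exists_maximal_clique_superset (N : Finset (Fin n)) (hN : IsClique E N) :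
    ∃ s, IsMaximalClique E s ∧ N ⊆ s := by
  classical
  obtain ⟨s, hs, hsmax⟩ := Finset.exists_max_image
    ((Finset.univ : Finset (Fin n)).powerset.filter (fun t => IsClique E t ∧ N ⊆ t))
    Finset.card ⟨N, by simp [hN]⟩
  rw [Finset.mem_filter] at hs
  obtain ⟨-, hsclique, hsN⟩ := hs
  refine ⟨s, ⟨hsclique, ?_⟩, hsN⟩
  intro t ht hst
  have htmem : t ∈ (Finset.univ : Finset (Fin n)).powerset.filter
      (fun t => IsClique E t ∧ N ⊆ t) := by
    simp only [Finset.mem_filter, Finset.mem_powerset]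
    exact ⟨Finset.subset_univ _, ht, hsN.trans hst⟩
  exact (Finset.eq_of_subset_of_card_le hst (hsmax t htmem)).symm

end Cliques

section PSDSum
variable {n p : ℕ}

lemma psd_compress {s : Finset (Fin n)} {M : Matrix (Fin n) (Fin n) ℝ} (hM : M.PosSemidef) :
    (selector s * M * (selector s)ᵀ).PosSemidef := by
  rw [← selector_conjTranspose]
  exact hM.mul_mul_conjTranspose_same (selector s)

lemma psd_expand {s : Finset (Fin n)} {M : Matrix {x // x ∈ s} {x // x ∈ s} ℝ}
    (hM : M.PosSemidef) :
    ((selector s)ᵀ * M * selector s).PosSemidef := by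
  rw [← selector_conjTranspose]
  exact hM.conjTranspose_mul_mul_same (selector s)

lemma psd_sum {C : Fin p → Finset (Fin n)}
    {Zk : (k : Fin p) → Matrix {x // x ∈ C k} {x // x ∈ C k} ℝ}
    (h : ∀ k, (Zk k).PosSemidef) :
    (∑ k, (selector (C k))ᵀ * Zk k * selector (C k)).PosSemidef := by
  exact Finset.sum_induction (fun k => (selector (C k))ᵀ * Zk k * selector (C k))
    (fun M => M.PosSemidef) (fun a b ha hb => ha.add hb) Matrix.PosSemidef.zero
    (fun k _ => psd_expand (h k))

end PSDSum

section Decomp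
variable {n p : ℕ} {E : Fin n → Fin n → Prop}

lemma decomp (hsym : Symmetric E) (hrefl : ∀ i, E i i) (hch : IsChordal E)
    (C : Fin p → Finset (Fin n))
    (hmax : ∀ s, IsMaximalClique E s ↔ ∃ k, C k = s) :
    ∀ (N : ℕ) (S : Finset (Fin n)) (Z : Matrix (Fin n) (Fin n) ℝ), S.card ≤ N →
      Z.PosSemidef → (∀ i j, Z i j ≠ 0 → i ∈ S ∧ j ∈ S ∧ E i j) →
      ∃ Zk : (k : Fin p) → Matrix {x // x ∈ C k} {x // x ∈ C k} ℝ,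
        (∀ k, (Zk k).PosSemidef) ∧
        Z = ∑ k, (selector (C k))ᵀ * Zk k * selector (C k) := by
  classical
  have base : ∀ (Z : Matrix (Fin n) (Fin n) ℝ), Z = 0 →
      ∃ Zk : (k : Fin p) → Matrix {x // x ∈ C k} {x // x ∈ C k} ℝ,
        (∀ k, (Zk k).PosSemidef) ∧
        Z = ∑ k, (selector (C k))ᵀ * Zk k * selector (C k) := by
    intro Z hZ0
    refine ⟨fun _ => 0, fun _ => Matrix.PosSemidef.zero, ?_⟩
    simp [hZ0]
  intro N
  induction N with
  | zero =>
    intro S Z hcard hpsd hsupp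
    have hS : S = ∅ := Finset.card_eq_zero.mp (Nat.le_zero.mp hcard)
    refine base Z ?_
    ext i j
    by_contra h
    have := (hsupp i j h).1
    simp [hS] at this
  | succ N ih =>
    intro S Z hcard hpsd hsupp
    by_cases hSe : S = ∅
    · refine base Z ?_
      ext i j
      by_contra h
      have := (hsupp i j h).1
      simp [hSe] at this
    · have hne : S.Nonempty := Finset.nonempty_iff_ne_empty.mpr hSe
      obtain ⟨v, hvS, hsimp⟩ := (exists_simplicial hsym hrefl hch S.card S le_rfl hne).1
      have hcard' : (S.erase v).card ≤ N := by
        have := Finset.card_erase_of_mem hvS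
        have hpos := Finset.card_pos.mpr hne
        omega
      have hsymm : ∀ i j, Z i j = Z j i := fun i j => by rw [← hpsd.1.apply j i]; simp
      by_cases hvv : Z v v = 0
      · -- row and column v vanish; recurse directly
        have hrow : ∀ i, Z v i = 0 := psd_row_zero hpsd v hvv
        have hcol : ∀ i, Z i v = 0 := fun i => by rw [hsymm i v, hrow]
        apply ih (S.erase v) Z hcard' hpsd
        intro i j hZij
        obtain ⟨hiS, hjS, hEij⟩ := hsupp i j hZij
        refine ⟨Finset.mem_erase.mpr ⟨?_, hiS⟩, Finset.mem_erase.mpr ⟨?_, hjS⟩, hEij⟩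
        · rintro rfl; exact hZij (hrow j)
        · rintro rfl; exact hZij (hcol i)
      · have hpos : 0 < Z v v := lt_of_le_of_ne (psd_diag_nonneg hpsd v) (Ne.symm hvv)
        obtain ⟨hZvPSD, hZ'PSD⟩ := schur_decomp hpsd v hpos
        set Zv : Matrix (Fin n) (Fin n) ℝ :=
          Matrix.of fun i j => Z i v * Z v j / Z v v with hZvdef
        set Z' : Matrix (Fin n) (Fin n) ℝ := Z - Zv with hZ'def
        have hs0 : ∀ i j, ¬(i ∈ S ∧ j ∈ S ∧ E i j) → Z i j = 0 := by
          intro i j h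
          by_contra h0
          exact h (hsupp i j h0)
        -- the closed neighbourhood of v is a clique
        set Nv := S.filter (fun c => E v c) with hNvdef
        have hNvclique : IsClique E Nv := by
          intro c hc d hd hcd
          rw [hNvdef, Finset.mem_filter] at hc hd
          by_cases hcv : c = v
          · subst hcv; exact hd.2
          · by_cases hdv : d = v
            · subst hdv; exact hsym hc.2
            · exact hsimp c hc.1 d hd.1 hc.2 hd.2 hcv hdv hcd
        obtain ⟨t, htmax, hNt⟩ := exists_maximal_clique_superset Nv hNvclique
        obtain ⟨k0, hk0⟩ := (hmax t).mp htmax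
        -- support of Zv lies in C k0
        have hZvsupp : ∀ i j, Zv i j ≠ 0 → i ∈ C k0 ∧ j ∈ C k0 := by
          intro i j hne2
          have hiv : Z i v ≠ 0 := by
            intro h; apply hne2; simp [hZvdef, h]
          have hvj : Z v j ≠ 0 := by
            intro h; apply hne2; simp [hZvdef, h]
          have h1 := hsupp i v hiv
          have h2 := hsupp v j hvj
          have hiN : i ∈ Nv := Finset.mem_filter.mpr ⟨h1.1, hsym h1.2.2⟩
          have hjN : j ∈ Nv := Finset.mem_filter.mpr ⟨h2.2.1, h2.2.2⟩
          rw [hk0]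
          exact ⟨hNt hiN, hNt hjN⟩
        -- support of Z'
        have hZ'zero : ∀ i j, ¬(i ∈ S.erase v ∧ j ∈ S.erase v ∧ E i j) → Z' i j = 0 := by
          intro i j hcon
          have hz' : Z' i j = Z i j - Z i v * Z v j / Z v v := by
            rw [hZ'def, Matrix.sub_apply, hZvdef]; rfl
          by_cases hiv : i = v
          · subst hiv
            rw [hz', mul_div_cancel_left₀ _ hvv, sub_self]
          · by_cases hjv : j = v
            · subst hjv
              rw [hz', mul_div_assoc]
              rw [div_self hvv, mul_one, sub_self]
            · by_cases hiS : i ∈ S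
              · by_cases hjS : j ∈ S
                · -- i, j ∈ S \ {v} and the conjunction fails, so ¬ E i j
                  have hnEij : ¬ E i j := by
                    intro hE
                    exact hcon ⟨Finset.mem_erase.mpr ⟨hiv, hiS⟩,
                      Finset.mem_erase.mpr ⟨hjv, hjS⟩, hE⟩
                  have hij : i ≠ j := by
                    rintro rfl; exact hnEij (hrefl i)
                  have hZij : Z i j = 0 := hs0 i j (fun h => hnEij h.2.2)
                  have hprod : Z i v * Z v j = 0 := by
                    by_contra hp
                    have hiv0 : Z i v ≠ 0 := fun h => hp (by rw [h, zero_mul])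
                    have hvj0 : Z v j ≠ 0 := fun h => hp (by rw [h, mul_zero])
                    have h1 := hsupp i v hiv0
                    have h2 := hsupp v j hvj0
                    exact hnEij (hsimp i hiS j hjS (hsym h1.2.2) h2.2.2 hiv hjv hij)
                  rw [hz', hZij, hprod, zero_div, sub_self]
                · have hZij : Z i j = 0 := hs0 i j (fun h => hjS h.2.1)
                  have hZvj : Z v j = 0 := hs0 v j (fun h => hjS h.2.1)
                  rw [hz', hZij, hZvj, mul_zero, zero_div, sub_self]
              · have hZij : Z i j = 0 := hs0 i j (fun h => hiS h.1)
                have hZiv : Z i v = 0 := hs0 i v (fun h => hiS h.1)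
                rw [hz', hZij, hZiv, zero_mul, zero_div, sub_self]
        have hZ'supp : ∀ i j, Z' i j ≠ 0 → i ∈ S.erase v ∧ j ∈ S.erase v ∧ E i j := by
          intro i j h
          by_contra hc
          exact h (hZ'zero i j hc)
        obtain ⟨Zk', hPSD', hsum'⟩ := ih (S.erase v) Z' hcard' hZ'PSD hZ'supp
        refine ⟨Function.update Zk' k0
          (Zk' k0 + selector (C k0) * Zv * (selector (C k0))ᵀ), ?_, ?_⟩
        · intro k
          by_cases hk : k = k0
          · subst hk
            rw [Function.update_self]
            exact (hPSD' _).add (psd_compress hZvPSD)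
          · rw [Function.update_of_ne hk]
            exact hPSD' k
        · have hterm : ∀ k, (selector (C k))ᵀ *
              (Function.update Zk' k0
                (Zk' k0 + selector (C k0) * Zv * (selector (C k0))ᵀ)) k * selector (C k)
              = (selector (C k))ᵀ * Zk' k * selector (C k)
                + (if k = k0 then Zv else 0) := by
            intro k
            by_cases hk : k = k0
            · subst hk
              rw [Function.update_self, if_pos rfl, Matrix.mul_add, Matrix.add_mul]
              congr 1
              exact compress_expand hZvsupp
            · rw [Function.update_of_ne hk, if_neg hk, add_zero]
          rw [Finset.sum_congr rfl fun k _ => hterm k, Finset.sum_add_distrib,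
            Finset.sum_ite_eq' Finset.univ k0 (fun _ => Zv), if_pos (Finset.mem_univ k0),
            ← hsum', hZ'def]
          abel

end Decomp


/-- **Agler's theorem.** Let `G = (V, E)` be a chordal graph on `{1,…,n}` with
all self-loops, with maximal cliques `C_1, …, C_p`, and let `Z` be an `n × n`
real symmetric matrix supported on `E`. Then `Z` is positive semidefinite if
and only if there exist positive semidefinite matrices `Z_k` of size
`|C_k| × |C_k|` such that `Z = Σ_k E_kᵀ Z_k E_k`. -/
theorem agler_theorem {n p : ℕ} (E : Fin n → Fin n → Prop) (hsym : Symmetric E)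
    (hrefl : ∀ i, E i i) (hchordal : IsChordal E)
    (C : Fin p → Finset (Fin n))
    (hmax : ∀ s, IsMaximalClique E s ↔ ∃ k, C k = s)
    (Z : Matrix (Fin n) (Fin n) ℝ) (hZ : Z.IsSymm)
    (hsupp : ∀ i j, ¬ E i j → Z i j = 0) :
    Z.PosSemidef ↔
      ∃ Zk : (k : Fin p) → Matrix {x // x ∈ C k} {x // x ∈ C k} ℝ,
        (∀ k, (Zk k).PosSemidef) ∧
        Z = ∑ k, (selector (C k))ᵀ * Zk k * selector (C k) := by
  constructor
  · intro hpsd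
    apply decomp hsym hrefl hchordal C hmax n Finset.univ Z
    · simp
    · exact hpsd
    · intro i j h
      refine ⟨Finset.mem_univ i, Finset.mem_univ j, ?_⟩
      by_contra hE
      exact h (hsupp i j hE)
  · rintro ⟨Zk, hZk, rfl⟩
    exact psd_sum hZk
end

section
/- Duality of sparse PSD cones, second direction. Let G = (V, E) be any undirected graph on V = {1,…,n} with (i,i) ∈ E for all i, and let X ∈ S^n be a symmetric matrix supported on E. Then X admits a PSD completion on E if and only if ⟨X, Z⟩ ≥ 0 (trace inner product) for every positive semidefinite symmetric matrix Z supported on E. In other words, within the space S^n(E,0) of symmetric matrices supported on E, the cone S^n_+(E,?) of completable partial matrices is the dual cone of S^n_+(E,0). -/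
open Matrix Finset


section helpers

variable {n : ℕ}

lemma quad_expand (M : Matrix (Fin n) (Fin n) ℝ) (x : Fin n → ℝ) :
    dotProduct (star x) (M *ᵥ x) = ∑ i, ∑ j, x i * M i j * x j := by
  simp only [dotProduct, mulVec, Pi.star_apply, star_trivial, Finset.mul_sum]
  exact Finset.sum_congr rfl fun i _ => Finset.sum_congr rfl fun j _ => by
    ring

lemma single_sum (i j : Fin n) (a b : ℝ) (f : Fin n → ℝ) :
    ∑ l, f l * (((Pi.single i a + Pi.single j b : Fin n → ℝ))) l = f i * a + f j * b := by
  simp [Pi.single_apply, mul_add, Finset.sum_add_distrib, mul_ite, mul_zero,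
    Finset.sum_ite_eq', Finset.mem_univ]

lemma quad_two {M : Matrix (Fin n) (Fin n) ℝ} (hM : M.PosSemidef) (i j : Fin n) (a b : ℝ) :
    0 ≤ a * a * M i i + a * b * (M i j + M j i) + b * b * M j j := by
  have h := hM.dotProduct_mulVec_nonneg (((Pi.single i a + Pi.single j b : Fin n → ℝ)))
  rw [quad_expand] at h
  have e1 : ∀ k, ∑ l, (((Pi.single i a + Pi.single j b : Fin n → ℝ))) k * M k l *
      (((Pi.single i a + Pi.single j b : Fin n → ℝ))) l
      = (((Pi.single i a + Pi.single j b : Fin n → ℝ))) k * M k i * a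
        + (((Pi.single i a + Pi.single j b : Fin n → ℝ))) k * M k j * b := by
    intro k
    have := single_sum i j a b (fun l => (((Pi.single i a + Pi.single j b : Fin n → ℝ))) k * M k l)
    simpa [mul_assoc] using this
  rw [Finset.sum_congr rfl fun k _ => e1 k] at h
  rw [Finset.sum_add_distrib] at h
  have e2 := single_sum i j a b (fun k => M k i)
  have e3 := single_sum i j a b (fun k => M k j)
  have e2' : ∑ k, (((Pi.single i a + Pi.single j b : Fin n → ℝ))) k * M k i * a
      = (M i i * a + M j i * b) * a := by
    rw [← e2, Finset.sum_mul]
    exact Finset.sum_congr rfl fun k _ => by ring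
  have e3' : ∑ k, (((Pi.single i a + Pi.single j b : Fin n → ℝ))) k * M k j * b
      = (M i j * a + M j j * b) * b := by
    rw [← e3, Finset.sum_mul]
    exact Finset.sum_congr rfl fun k _ => by ring
  rw [e2', e3'] at h
  nlinarith [h]

lemma psd_diag_nonneg_s3 {M : Matrix (Fin n) (Fin n) ℝ} (hM : M.PosSemidef) (i : Fin n) :
    0 ≤ M i i := by
  have := quad_two hM i i 1 0
  linarith

lemma psd_entry_bound {M : Matrix (Fin n) (Fin n) ℝ} (hM : M.PosSemidef) (i j : Fin n) :
    |M i j| ≤ (M i i + M j j) / 2 := by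
  have hsym : M j i = M i j := by
    have := congrFun (congrFun hM.1 i) j
    simpa [conjTranspose_apply] using this
  have h1 := quad_two hM i j 1 1
  have h2 := quad_two hM i j 1 (-1)
  rw [abs_le]
  constructor <;> nlinarith [h1, h2]

lemma psd_trace_mul_nonneg {A B : Matrix (Fin n) (Fin n) ℝ}
    (hA : A.PosSemidef) (hB : B.PosSemidef) : 0 ≤ (A * B).trace := by
  obtain ⟨C, rfl⟩ : ∃ C : Matrix (Fin n) (Fin n) ℝ, B = Cᴴ * C := by
    open scoped MatrixOrder in
    simpa [star_eq_conjTranspose] using CStarAlgebra.nonneg_iff_eq_star_mul_self.mp hB.nonneg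
  rw [← Matrix.mul_assoc, Matrix.trace_mul_cycle]
  have hP : (C * A * Cᴴ).PosSemidef := by
    simpa [Matrix.mul_assoc] using hA.mul_mul_conjTranspose_same C
  rw [Matrix.trace]
  exact Finset.sum_nonneg fun i _ => psd_diag_nonneg_s3 hP i

lemma psd_smul {M : Matrix (Fin n) (Fin n) ℝ} (hM : M.PosSemidef) {c : ℝ} (hc : 0 ≤ c) :
    (c • M).PosSemidef := by
  refine PosSemidef.of_dotProduct_mulVec_nonneg ?_ fun x => ?_
  · unfold Matrix.IsHermitian
    rw [conjTranspose_smul, hM.1]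
    simp
  · rw [smul_mulVec, dotProduct_smul, smul_eq_mul]
    exact mul_nonneg hc (hM.dotProduct_mulVec_nonneg x)

lemma isClosed_psd : IsClosed {M : Matrix (Fin n) (Fin n) ℝ | M.PosSemidef} := by
  have : {M : Matrix (Fin n) (Fin n) ℝ | M.PosSemidef}
      = (⋂ i, ⋂ j, {M : Matrix (Fin n) (Fin n) ℝ | M j i = M i j})
        ∩ ⋂ x : Fin n → ℝ, {M : Matrix (Fin n) (Fin n) ℝ | 0 ≤ dotProduct (star x) (M *ᵥ x)} := by
    ext M
    simp only [Set.mem_setOf_eq, Set.mem_inter_iff, Set.mem_iInter]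
    constructor
    · intro h
      refine ⟨fun i j => ?_, fun x => h.dotProduct_mulVec_nonneg x⟩
      have := congrFun (congrFun h.1 i) j
      simpa [conjTranspose_apply] using this
    · intro h
      refine PosSemidef.of_dotProduct_mulVec_nonneg ?_ h.2
      ext i j
      simp [conjTranspose_apply, h.1 i j]
  rw [this]
  refine IsClosed.inter ?_ ?_
  · exact isClosed_iInter fun i => isClosed_iInter fun j =>
      isClosed_eq (continuous_id.matrix_elem j i) (continuous_id.matrix_elem i j)
  · refine isClosed_iInter fun x => ?_
    have h : Continuous fun M : Matrix (Fin n) (Fin n) ℝ => dotProduct (star x) (M *ᵥ x) :=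
      Continuous.dotProduct continuous_const (continuous_id.matrix_mulVec continuous_const)
    exact isClosed_le continuous_const h

lemma swap_sum (E : Fin n → Fin n → Prop) [∀ i j, Decidable (E i j)] (hsym : Symmetric E)
    (g : Fin n → Fin n → ℝ) :
    ∑ i, ∑ j, (if E i j then g i j else 0) = ∑ i, ∑ j, (if E i j then g j i else 0) := by
  rw [Finset.sum_comm]
  exact Finset.sum_congr rfl fun j _ => Finset.sum_congr rfl fun i _ =>
    if_congr ⟨fun h => hsym h, fun h => hsym h⟩ rfl rfl

end helpers

open scoped RealInnerProductSpace

attribute [local instance] Matrix.normedAddCommGroup Matrix.normedSpace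


/-- **Duality of sparse PSD cones, second direction.** Let `E` be any symmetric
reflexive edge relation on `{1,…,n}` and `X` a symmetric matrix supported on
`E`. Then `X` admits a positive semidefinite completion on `E` if and only if
`⟨X, Z⟩ = trace(XZ) ≥ 0` for every positive semidefinite symmetric matrix `Z`
supported on `E`. -/
theorem sparse_psd_cone_duality_second {n : ℕ} (E : Fin n → Fin n → Prop)
    (hsym : Symmetric E) (hrefl : ∀ i, E i i)
    (X : Matrix (Fin n) (Fin n) ℝ) (hX : X.IsSymm)
    (hsupp : ∀ i j, ¬ E i j → X i j = 0) :
    (∃ M : Matrix (Fin n) (Fin n) ℝ, M.PosSemidef ∧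
        ∀ i j, E i j → M i j = X i j) ↔
      ∀ Z : Matrix (Fin n) (Fin n) ℝ, Z.PosSemidef →
        (∀ i j, ¬ E i j → Z i j = 0) →
        0 ≤ Matrix.trace (X * Z) := by
  classical
  have hXsym : ∀ i j, X j i = X i j := by
    intro i j
    have h1 := congrFun (congrFun hX i) j
    rwa [Matrix.transpose_apply] at h1
  constructor
  · rintro ⟨M, hMpsd, hMe⟩ Z hZ hZsupp
    have htr : Matrix.trace (X * Z) = Matrix.trace (M * Z) := by
      simp only [Matrix.trace, Matrix.diag, Matrix.mul_apply]
      refine Finset.sum_congr rfl fun i _ => Finset.sum_congr rfl fun j _ => ?_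
      by_cases h : E i j
      · rw [hMe i j h]
      · rw [hZsupp j i (fun hji => h (hsym hji)), mul_zero, mul_zero]
    rw [htr]
    exact psd_trace_mul_nonneg hMpsd hZ
  · intro hdual
    -- the projection onto coordinates in `E`, valued in Euclidean space
    let L : Matrix (Fin n) (Fin n) ℝ →ₗ[ℝ] EuclideanSpace ℝ (Fin n × Fin n) :=
      { toFun := fun M => WithLp.toLp 2 fun p : Fin n × Fin n => if E p.1 p.2 then M p.1 p.2 else 0
        map_add' := by
          intro A B
          ext p
          by_cases h : E p.1 p.2 <;>
            simp [h, PiLp.add_apply, Matrix.add_apply]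
        map_smul' := by
          intro c A
          ext p
          by_cases h : E p.1 p.2 <;>
            simp [h, PiLp.smul_apply, Matrix.smul_apply, smul_eq_mul] }
    have hLapp : ∀ (M : Matrix (Fin n) (Fin n) ℝ) (p : Fin n × Fin n),
        L M p = if E p.1 p.2 then M p.1 p.2 else 0 := fun _ _ => rfl
    -- the projected PSD cone
    let S : ConvexCone ℝ (EuclideanSpace ℝ (Fin n × Fin n)) :=
      { carrier := L '' {M | M.PosSemidef}
        smul_mem' := by
          rintro c hc y ⟨M, hM, rfl⟩
          exact ⟨c • M, psd_smul hM hc.le, L.map_smul c M⟩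
        add_mem' := by
          rintro y ⟨My, hMy, rfl⟩ z ⟨Mz, hMz, rfl⟩
          exact ⟨My + Mz, hMy.add hMz, L.map_add My Mz⟩ }
    have hmemS : ∀ y, y ∈ S ↔ ∃ M, M.PosSemidef ∧ L M = y := by
      intro y
      constructor
      · rintro ⟨M, hM, rfl⟩; exact ⟨M, hM, rfl⟩
      · rintro ⟨M, hM, rfl⟩; exact ⟨M, hM, rfl⟩
    have hLcont : Continuous L := L.continuous_of_finiteDimensional
    -- S is closed
    have hSclosed : IsClosed (S : Set (EuclideanSpace ℝ (Fin n × Fin n))) := by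
      refine IsSeqClosed.isClosed ?_
      intro y l hy hl
      choose M hMp hLM using fun k => (hmemS (y k)).mp (hy k)
      have hconv : ∀ q : Fin n × Fin n,
          Filter.Tendsto (fun k => y k q) Filter.atTop (nhds (l q)) := by
        intro q
        exact ((EuclideanSpace.proj q).continuous.tendsto l).comp hl
      have hb : ∀ i : Fin n, ∃ C, ∀ k, M k i i ≤ C := by
        intro i
        obtain ⟨C, hC⟩ := (hconv (i, i)).bddAbove_range
        refine ⟨C, fun k => ?_⟩
        have h1 : y k (i, i) ≤ C := hC (Set.mem_range_self k)
        have h2 : L (M k) (i, i) = y k (i, i) := by rw [hLM k]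
        rw [hLapp, if_pos (hrefl i)] at h2
        linarith [h1, h2.le, h2.ge]
      choose C hC using hb
      set B : ℝ := ∑ i, |C i| with hB
      have hBnonneg : 0 ≤ B := Finset.sum_nonneg fun i _ => abs_nonneg _
      have habs : ∀ i : Fin n, |C i| ≤ B :=
        fun i => Finset.single_le_sum (fun j _ => abs_nonneg (C j)) (Finset.mem_univ i)
      have hnorm : ∀ k, ‖M k‖ ≤ B := by
        intro k
        rw [Matrix.norm_le_iff hBnonneg]
        intro i j
        rw [Real.norm_eq_abs]
        have h1 := psd_entry_bound (hMp k) i j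
        have h2 := hC i k
        have h3 := hC j k
        have h4 := le_abs_self (C i)
        have h5 := le_abs_self (C j)
        have h6 := habs i
        have h7 := habs j
        linarith
      have hcpt : IsCompact
          (Metric.closedBall (0 : Matrix (Fin n) (Fin n) ℝ) B ∩ {M | M.PosSemidef}) :=
        (isCompact_closedBall _ _).inter_right isClosed_psd
      have hmem : ∀ k, M k ∈
          Metric.closedBall (0 : Matrix (Fin n) (Fin n) ℝ) B ∩ {M | M.PosSemidef} :=
        fun k => ⟨mem_closedBall_zero_iff.mpr (hnorm k), hMp k⟩
      haveI : FirstCountableTopology (Matrix (Fin n) (Fin n) ℝ) :=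
        inferInstanceAs (FirstCountableTopology (Fin n → Fin n → ℝ))
      obtain ⟨M₀, hM₀mem, φ, hφ, hMlim⟩ := hcpt.tendsto_subseq hmem
      have h1 : Filter.Tendsto (fun k => L (M (φ k))) Filter.atTop (nhds (L M₀)) :=
        (hLcont.tendsto M₀).comp hMlim
      have h1' : Filter.Tendsto (fun k => y (φ k)) Filter.atTop (nhds (L M₀)) := by
        simpa only [hLM] using h1
      have h2 : Filter.Tendsto (fun k => y (φ k)) Filter.atTop (nhds l) :=
        hl.comp hφ.tendsto_atTop
      exact (hmemS l).mpr ⟨M₀, hM₀mem.2, tendsto_nhds_unique h1' h2⟩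
    have hSne : ((S : Set (EuclideanSpace ℝ (Fin n × Fin n)))).Nonempty :=
      ⟨L 0, ⟨0, Matrix.PosSemidef.zero, rfl⟩⟩
    have hbidual : ∀ w, w ∈ S ↔ ∀ z, (∀ x ∈ (S : Set (EuclideanSpace ℝ (Fin n × Fin n))),
        0 ≤ ⟪x, z⟫) → 0 ≤ ⟪z, w⟫ := by
      intro w
      constructor
      · intro hw z hz
        rw [real_inner_comm]
        exact hz w hw
      · intro h
        by_contra hw
        let C : ProperCone ℝ (EuclideanSpace ℝ (Fin n × Fin n)) :=
          ⟨S.toPointedCone (ConvexCone.Pointed.of_nonempty_of_isClosed hSne hSclosed), hSclosed⟩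
        obtain ⟨z, hz, hneg⟩ := C.hyperplane_separation' (x₀ := w) hw
        have h' := h z hz
        rw [real_inner_comm] at h'
        linarith
    -- it suffices to show L X ∈ S
    have hXmem : L X ∈ S := by
      rw [hbidual]
      intro z hz
      -- the symmetrized matrix associated to z
      set Z : Matrix (Fin n) (Fin n) ℝ :=
        Matrix.of fun i j => if E i j then (z (i, j) + z (j, i)) / 2 else 0 with hZdef
      have hZapp : ∀ i j, Z i j = if E i j then (z (i, j) + z (j, i)) / 2 else 0 :=
        fun _ _ => rfl
      have hZsupp : ∀ i j, ¬ E i j → Z i j = 0 := by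
        intro i j h; rw [hZapp, if_neg h]
      have hZsym : ∀ i j, Z j i = Z i j := by
        intro i j
        rw [hZapp, hZapp]
        by_cases h : E i j
        · rw [if_pos h, if_pos (hsym h)]; ring
        · rw [if_neg h, if_neg (fun h' => h (hsym h'))]
      -- Z is positive semidefinite
      have hZpsd : Z.PosSemidef := by
        apply PosSemidef.of_dotProduct_mulVec_nonneg
        · ext i j
          rw [Matrix.conjTranspose_apply, star_trivial]
          exact hZsym i j
        · intro x
          rw [quad_expand]
          -- the rank-one matrix x xᵀ
          set Mx : Matrix (Fin n) (Fin n) ℝ := Matrix.of fun i j => x i * x j with hMxdef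
          have hMxpsd : Mx.PosSemidef := by
            apply PosSemidef.of_dotProduct_mulVec_nonneg
            · ext i j
              rw [Matrix.conjTranspose_apply, star_trivial]
              show x j * x i = x i * x j
              ring
            · intro v
              rw [quad_expand]
              have : ∑ i, ∑ j, v i * Mx i j * v j
                  = (∑ i, v i * x i) * (∑ j, v j * x j) := by
                rw [Finset.sum_mul_sum]
                exact Finset.sum_congr rfl fun i _ => Finset.sum_congr rfl fun j _ => by
                  show v i * (x i * x j) * v j = _
                  ring
              rw [this]
              exact mul_self_nonneg _
          have hMxS : L Mx ∈ (S : Set (EuclideanSpace ℝ (Fin n × Fin n))) :=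
            ⟨Mx, hMxpsd, rfl⟩
          have h0 := hz (L Mx) hMxS
          rw [PiLp.inner_apply] at h0
          have hexp : ∑ p : Fin n × Fin n, ⟪L Mx p, z p⟫
              = ∑ i, ∑ j, (if E i j then x i * x j * z (i, j) else 0) := by
            rw [Fintype.sum_prod_type]
            refine Finset.sum_congr rfl fun i _ => Finset.sum_congr rfl fun j _ => ?_
            rw [RCLike.inner_apply', starRingEnd_apply, star_trivial, hLapp]
            by_cases h : E i j
            · rw [if_pos h, if_pos h]; rfl
            · rw [if_neg h, if_neg h, zero_mul]
          rw [hexp] at h0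
          have hswap := swap_sum E hsym (fun i j => x i * x j * z (i, j))
          have hgoal : ∑ i, ∑ j, x i * Z i j * x j
              = ∑ i, ∑ j, (if E i j then x i * x j * z (i, j) else 0) := by
            have step : ∀ i j, x i * Z i j * x j
                = ((if E i j then x i * x j * z (i, j) else 0)
                  + (if E i j then x j * x i * z (j, i) else 0)) / 2 := by
              intro i j
              rw [hZapp]
              by_cases h : E i j
              · rw [if_pos h, if_pos h, if_pos h]; ring
              · rw [if_neg h, if_neg h, if_neg h]; ring
            calc ∑ i, ∑ j, x i * Z i j * x j
                = ((∑ i, ∑ j, (if E i j then x i * x j * z (i, j) else 0))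
                  + ∑ i, ∑ j, (if E i j then x j * x i * z (j, i) else 0)) / 2 := by
                  simp only [step, ← Finset.sum_div, Finset.sum_add_distrib]
              _ = _ := by rw [← hswap]; ring
          rw [hgoal]
          exact h0
      -- conclude using the duality hypothesis
      have htr := hdual Z hZpsd hZsupp
      have hXswap := swap_sum E hsym (fun i j => X i j * z (i, j))
      have hXswap' : ∑ i, ∑ j, (if E i j then X i j * z (i, j) else 0)
          = ∑ i, ∑ j, (if E i j then X i j * z (j, i) else 0) := by
        rw [hXswap]
        exact Finset.sum_congr rfl fun i _ => Finset.sum_congr rfl fun j _ => by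
          by_cases h : E i j
          · rw [if_pos h, if_pos h, hXsym i j]
          · rw [if_neg h, if_neg h]
      have hinner : ⟪z, L X⟫ = Matrix.trace (X * Z) := by
        rw [PiLp.inner_apply]
        have lhs : ∑ p : Fin n × Fin n, ⟪z p, L X p⟫
            = ∑ i, ∑ j, (if E i j then X i j * z (i, j) else 0) := by
          rw [Fintype.sum_prod_type]
          refine Finset.sum_congr rfl fun i _ => Finset.sum_congr rfl fun j _ => ?_
          rw [RCLike.inner_apply', starRingEnd_apply, star_trivial, hLapp]
          by_cases h : E i j
          · rw [if_pos h, if_pos h]; ring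
          · rw [if_neg h, if_neg h, mul_zero]
        have rhs : Matrix.trace (X * Z)
            = ∑ i, ∑ j, ((if E i j then X i j * z (i, j) else 0)
                + (if E i j then X i j * z (j, i) else 0)) / 2 := by
          simp only [Matrix.trace, Matrix.diag, Matrix.mul_apply]
          refine Finset.sum_congr rfl fun i _ => Finset.sum_congr rfl fun j _ => ?_
          rw [hZapp]
          by_cases h : E i j
          · rw [if_pos (hsym h), if_pos h, if_pos h]; ring
          · rw [if_neg (fun h' => h (hsym h')), if_neg h, if_neg h]
            simp
        rw [lhs, rhs]
        simp only [← Finset.sum_div, Finset.sum_add_distrib]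
        rw [← hXswap']
        ring
      rw [hinner]
      exact htr
    obtain ⟨M, hMpsd, hLMX⟩ := (hmemS (L X)).mp hXmem
    refine ⟨M, hMpsd, fun i j hij => ?_⟩
    have := congrArg (fun v => v (i, j)) hLMX
    rw [hLapp, hLapp, if_pos hij, if_pos hij] at this
    exact this
end

section
/- KKT characterization of the dual ADMM (y, v)-update. Let A ∈ R^{m×N}, b ∈ R^m, c ∈ R^N, ρ > 0, and for k = 1,…,p let H_k ∈ R^{n_k×N} and w_k ∈ R^{n_k}. Set D = Σ_{k=1}^p H_kᵀ H_k. Then a point (y*, v_1*, …, v_p*) with c − Aᵀ y* − Σ_{k=1}^p H_kᵀ v_k* = 0 minimizes the convex function (y, v_1, …, v_p) ↦ −⟨b, y⟩ + (ρ/2) Σ_{k=1}^p ‖w_k − v_k‖² over the affine set {(y, v_1,…,v_p) : c − Aᵀ y − Σ_k H_kᵀ v_k = 0} if and only if there exists x ∈ R^N such that D x + Aᵀ y* = c − Σ_{k=1}^p H_kᵀ w_k, A x = −ρ^{-1} b, and v_k* = w_k + H_k x for every k = 1,…,p. -/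
/-!
Write `u = (y, v)` and `T u = Aᵀ y + ∑ₖ H_kᵀ v_k`, so that the feasible set is `u* + ker T`.
Along a direction `d` the objective expands as
`f (u* + d) = f u* + ρ (⟪g, d⟫ + ½ ∑ₖ ‖d_k‖²)` with `g = (-ρ⁻¹ b, v* - w)`; replacing `d` by `t d`
shows that `u*` is optimal iff `g` annihilates `ker T`. By duality this means `g = Tᵀ x` for some
`x`, i.e. `A x = -ρ⁻¹ b` and `H_k x = v_k* - w_k`, and feasibility of `u*` then turns into
`D x + Aᵀ y* = c - ∑ₖ H_kᵀ w_k`.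
-/

open Matrix Finset

theorem LinearMap.exists_dual_comp_eq_of_ker_le {K V₁ V₂ : Type*} [Field K]
    [AddCommGroup V₁] [Module K V₁] [AddCommGroup V₂] [Module K V₂]
    (f : V₁ →ₗ[K] V₂) (ℓ : Module.Dual K V₁) (h : LinearMap.ker f ≤ LinearMap.ker ℓ) :
    ∃ φ : Module.Dual K V₂, φ ∘ₗ f = ℓ := by
  have hℓ : ℓ ∈ LinearMap.range f.dualMap := by
    rw [LinearMap.range_dualMap_eq_dualAnnihilator_ker, Submodule.mem_dualAnnihilator]
    exact fun d hd => h hd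
  obtain ⟨φ, rfl⟩ := hℓ
  exact ⟨φ, rfl⟩

theorem forall_nonneg_linear_add_quadratic_iff {V : Type*} [AddCommGroup V] [Module ℝ V]
    (K : Submodule ℝ V) (ℓ : V →ₗ[ℝ] ℝ) (q : V → ℝ) (hq_nonneg : ∀ d, 0 ≤ q d)
    (hq_smul : ∀ (t : ℝ) d, q (t • d) = t ^ 2 * q d) :
    (∀ d ∈ K, 0 ≤ ℓ d + q d) ↔ ∀ d ∈ K, ℓ d = 0 := by
  refine ⟨fun h d hd => ?_, fun h d hd => by rw [h d hd, zero_add]; exact hq_nonneg d⟩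
  have hdiscr : discrim (q d) (ℓ d) 0 ≤ 0 := discrim_le_zero fun t => by
    have := h (t • d) (K.smul_mem t hd)
    rw [map_smul, hq_smul, smul_eq_mul] at this
    linarith
  rw [discrim, mul_zero, sub_zero] at hdiscr
  exact pow_eq_zero_iff two_ne_zero |>.mp (le_antisymm hdiscr (sq_nonneg _))

theorem sub_dotProduct_sub_self {n R : Type*} [Fintype n] [CommRing R] (a e : n → R) :
    (a - e) ⬝ᵥ (a - e) = a ⬝ᵥ a - 2 * (a ⬝ᵥ e) + e ⬝ᵥ e := by
  simp only [sub_dotProduct, dotProduct_sub, dotProduct_comm e a]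
  ring

namespace DualADMM

variable {m N p : ℕ} {nk : Fin p → ℕ}

abbrev Var (m : ℕ) {p : ℕ} (nk : Fin p → ℕ) : Type :=
  (Fin m → ℝ) × ((k : Fin p) → Fin (nk k) → ℝ)

section

variable (A : Matrix (Fin m) (Fin N) ℝ) (H : (k : Fin p) → Matrix (Fin (nk k)) (Fin N) ℝ)

def constraintMap : Var m nk →ₗ[ℝ] (Fin N → ℝ) where
  toFun u := Aᵀ *ᵥ u.1 + ∑ k, (H k)ᵀ *ᵥ u.2 k
  map_add' u u' := by
    simp only [Prod.fst_add, Prod.snd_add, Pi.add_apply, mulVec_add, Finset.sum_add_distrib]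
    abel
  map_smul' t u := by
    simp only [Prod.smul_fst, Prod.smul_snd, Pi.smul_apply, mulVec_smul, ← Finset.smul_sum,
      smul_add, RingHom.id_apply]

def pairing (g : Var m nk) : Module.Dual ℝ (Var m nk) where
  toFun d := g.1 ⬝ᵥ d.1 + ∑ k, g.2 k ⬝ᵥ d.2 k
  map_add' d d' := by
    simp only [Prod.fst_add, Prod.snd_add, Pi.add_apply, dotProduct_add, Finset.sum_add_distrib]
    abel
  map_smul' t d := by
    simp only [Prod.smul_fst, Prod.smul_snd, Pi.smul_apply, dotProduct_smul, ← Finset.smul_sum,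
      smul_add, RingHom.id_apply]

theorem dotProductEquiv_comp_constraintMap (x : Fin N → ℝ) :
    dotProductEquiv ℝ (Fin N) x ∘ₗ constraintMap A H = pairing (A *ᵥ x, fun k => H k *ᵥ x) := by
  refine LinearMap.ext fun d => ?_
  simp only [LinearMap.comp_apply, dotProductEquiv_apply_apply, constraintMap, pairing,
    LinearMap.coe_mk, AddHom.coe_mk, dotProduct_add, dotProduct_sum, dotProduct_mulVec,
    vecMul_transpose]

end

theorem pairing_injective : Function.Injective (pairing : Var m nk → _) := by
  intro g g' h
  have h₁ : g.1 = g'.1 := dotProduct_eq _ _ fun u => by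
    simpa [pairing] using LinearMap.congr_fun h (u, 0)
  have h₂ : g.2 = g'.2 := funext fun k => dotProduct_eq _ _ fun u => by
    have hsingle (f : (k : Fin p) → Fin (nk k) → ℝ) :
        ∑ j, f j ⬝ᵥ Pi.single (M := fun j => Fin (nk j) → ℝ) k u j = f k ⬝ᵥ u := by
      rw [Fintype.sum_eq_single k fun j hj => by rw [Pi.single_eq_of_ne hj, dotProduct_zero],
        Pi.single_eq_same]
    simpa [pairing, hsingle] using LinearMap.congr_fun h (0, Pi.single k u)
  exact Prod.ext h₁ h₂

theorem pairing_eq_zero_on_ker_iff {A : Matrix (Fin m) (Fin N) ℝ}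
    {H : (k : Fin p) → Matrix (Fin (nk k)) (Fin N) ℝ} {g : Var m nk} :
    (∀ d ∈ LinearMap.ker (constraintMap A H), pairing g d = 0) ↔
      ∃ x : Fin N → ℝ, (A *ᵥ x, fun k => H k *ᵥ x) = g := by
  constructor
  · intro h
    obtain ⟨φ, hφ⟩ := (constraintMap A H).exists_dual_comp_eq_of_ker_le (pairing g) h
    obtain ⟨x, rfl⟩ := (dotProductEquiv ℝ (Fin N)).surjective φ
    exact ⟨x, pairing_injective (by rw [← dotProductEquiv_comp_constraintMap, hφ])⟩
  · rintro ⟨x, rfl⟩ d hd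
    rw [← dotProductEquiv_comp_constraintMap, LinearMap.comp_apply, LinearMap.mem_ker.mp hd,
      map_zero]

noncomputable def objective (b : Fin m → ℝ) (ρ : ℝ) (w : (k : Fin p) → Fin (nk k) → ℝ)
    (u : Var m nk) : ℝ :=
  -(b ⬝ᵥ u.1) + ρ / 2 * ∑ k, (w k - u.2 k) ⬝ᵥ (w k - u.2 k)

theorem objective_add (b : Fin m → ℝ) {ρ : ℝ} (hρ : ρ ≠ 0) (w : (k : Fin p) → Fin (nk k) → ℝ)
    (u d : Var m nk) :
    objective b ρ w (u + d) = objective b ρ w u +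
      ρ * (pairing (-(ρ⁻¹ • b), u.2 - w) d + 1 / 2 * ∑ k, d.2 k ⬝ᵥ d.2 k) := by
  simp only [objective, pairing, LinearMap.coe_mk, AddHom.coe_mk, Prod.fst_add, Prod.snd_add,
    Pi.add_apply, Pi.sub_apply, ← sub_sub, sub_dotProduct_sub_self, Finset.sum_add_distrib,
    Finset.sum_sub_distrib, dotProduct_add, neg_dotProduct, smul_dotProduct, smul_eq_mul,
    ← Finset.mul_sum]
  simp only [sub_dotProduct, Finset.sum_sub_distrib]
  field_simp
  ring

theorem optimal_iff_pairing_eq_zero_on_ker {A : Matrix (Fin m) (Fin N) ℝ} {b : Fin m → ℝ}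
    {c : Fin N → ℝ} {ρ : ℝ} (hρ : 0 < ρ) {H : (k : Fin p) → Matrix (Fin (nk k)) (Fin N) ℝ}
    {w vstar : (k : Fin p) → Fin (nk k) → ℝ} {ystar : Fin m → ℝ}
    (hfeas : c - Aᵀ *ᵥ ystar - ∑ k, (H k)ᵀ *ᵥ vstar k = 0) :
    (∀ (y : Fin m → ℝ) (v : (k : Fin p) → Fin (nk k) → ℝ),
        c - Aᵀ *ᵥ y - ∑ k, (H k)ᵀ *ᵥ v k = 0 →
        objective b ρ w (ystar, vstar) ≤ objective b ρ w (y, v)) ↔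
      ∀ d ∈ LinearMap.ker (constraintMap A H), pairing (-(ρ⁻¹ • b), vstar - w) d = 0 := by
  have hfeas_iff (u : Var m nk) : c - Aᵀ *ᵥ u.1 - ∑ k, (H k)ᵀ *ᵥ u.2 k = 0 ↔
      u - (ystar, vstar) ∈ LinearMap.ker (constraintMap A H) := by
    rw [sub_sub, sub_eq_zero] at hfeas ⊢
    rw [LinearMap.mem_ker, map_sub, sub_eq_zero]
    exact ⟨fun h => h.symm.trans hfeas, fun h => hfeas.trans h.symm⟩
  have hdescent (d : Var m nk) :
      objective b ρ w (ystar, vstar) ≤ objective b ρ w ((ystar, vstar) + d) ↔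
        0 ≤ pairing (-(ρ⁻¹ • b), vstar - w) d + 1 / 2 * ∑ k, d.2 k ⬝ᵥ d.2 k := by
    rw [objective_add b hρ.ne', le_add_iff_nonneg_right, mul_nonneg_iff_of_pos_left hρ]
  rw [← forall_nonneg_linear_add_quadratic_iff _ _ (fun d => 1 / 2 * ∑ k, d.2 k ⬝ᵥ d.2 k)]
  · refine ⟨fun h d hd => (hdescent d).mp ?_, fun h y v hyv => ?_⟩
    · exact h _ _ ((hfeas_iff ((ystar, vstar) + d)).mpr (by rwa [add_sub_cancel_left]))
    · have := (hdescent ((y, v) - (ystar, vstar))).mpr (h _ ((hfeas_iff (y, v)).mp hyv))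
      rwa [add_sub_cancel] at this
  · exact fun d => mul_nonneg (by norm_num) <| Finset.sum_nonneg fun k _ => by
      simpa using dotProduct_self_star_nonneg (d.2 k)
  · intro t d
    simp only [Prod.smul_snd, Pi.smul_apply, smul_dotProduct, dotProduct_smul, smul_eq_mul,
      ← Finset.mul_sum]
    ring

theorem gram_mulVec_add_eq {A : Matrix (Fin m) (Fin N) ℝ} {c : Fin N → ℝ}
    {H : (k : Fin p) → Matrix (Fin (nk k)) (Fin N) ℝ} {w vstar : (k : Fin p) → Fin (nk k) → ℝ}
    {ystar : Fin m → ℝ} {x : Fin N → ℝ}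
    (hfeas : c - Aᵀ *ᵥ ystar - ∑ k, (H k)ᵀ *ᵥ vstar k = 0)
    (hv : ∀ k, vstar k = w k + H k *ᵥ x) :
    (∑ k, (H k)ᵀ * H k) *ᵥ x + Aᵀ *ᵥ ystar = c - ∑ k, (H k)ᵀ *ᵥ w k := by
  have hHx : (∑ k, (H k)ᵀ * H k) *ᵥ x = ∑ k, (H k)ᵀ *ᵥ vstar k - ∑ k, (H k)ᵀ *ᵥ w k := by
    simp only [Matrix.sum_mulVec, ← Matrix.mulVec_mulVec, hv, Matrix.mulVec_add,
      Finset.sum_add_distrib, add_sub_cancel_left]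
  rw [hHx]
  linear_combination (norm := module) -hfeas

end DualADMM

/-- **KKT characterization of the dual ADMM `(y, v)`-update.** A feasible point
`(y*, v_1*, …, v_p*)` (with `c − Aᵀ y* − Σ_k H_kᵀ v_k* = 0`) minimizes
`(y, v) ↦ −⟨b, y⟩ + (ρ/2) Σ_k ‖w_k − v_k‖²` over the affine set
`{(y, v) : c − Aᵀ y − Σ_k H_kᵀ v_k = 0}` if and only if there exists
`x ∈ R^N` with `D x + Aᵀ y* = c − Σ_k H_kᵀ w_k`, `A x = −ρ⁻¹ b`, and
`v_k* = w_k + H_k x` for every `k`, where `D = Σ_k H_kᵀ H_k`. -/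
theorem dual_admm_yv_update_kkt {m N p : ℕ}
    (A : Matrix (Fin m) (Fin N) ℝ) (b : Fin m → ℝ) (c : Fin N → ℝ)
    (ρ : ℝ) (hρ : 0 < ρ)
    (nk : Fin p → ℕ) (H : (k : Fin p) → Matrix (Fin (nk k)) (Fin N) ℝ)
    (w : (k : Fin p) → Fin (nk k) → ℝ)
    (ystar : Fin m → ℝ) (vstar : (k : Fin p) → Fin (nk k) → ℝ)
    (hfeas : c - Aᵀ.mulVec ystar - ∑ k, (H k)ᵀ.mulVec (vstar k) = 0) :
    (∀ (y : Fin m → ℝ) (v : (k : Fin p) → Fin (nk k) → ℝ),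
        c - Aᵀ.mulVec y - ∑ k, (H k)ᵀ.mulVec (v k) = 0 →
        -(b ⬝ᵥ ystar) + ρ / 2 * ∑ k, (w k - vstar k) ⬝ᵥ (w k - vstar k) ≤
          -(b ⬝ᵥ y) + ρ / 2 * ∑ k, (w k - v k) ⬝ᵥ (w k - v k)) ↔
      ∃ x : Fin N → ℝ,
        (∑ k, (H k)ᵀ * H k).mulVec x + Aᵀ.mulVec ystar =
            c - ∑ k, (H k)ᵀ.mulVec (w k) ∧
          A.mulVec x = -(ρ⁻¹ • b) ∧
          ∀ k, vstar k = w k + (H k).mulVec x := by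
  refine (DualADMM.optimal_iff_pairing_eq_zero_on_ker hρ hfeas).trans <|
    DualADMM.pairing_eq_zero_on_ker_iff.trans <| exists_congr fun x => ?_
  have hv : (fun k => H k *ᵥ x) = vstar - w ↔ ∀ k, vstar k = w k + H k *ᵥ x := by
    rw [funext_iff]
    exact forall_congr' fun k => by rw [Pi.sub_apply, eq_sub_iff_add_eq', eq_comm]
  rw [Prod.mk.injEq, hv]
  exact ⟨fun ⟨hA, hH⟩ => ⟨DualADMM.gram_mulVec_add_eq hfeas hH, hA, hH⟩,
    fun ⟨_, hA, hH⟩ => ⟨hA, hH⟩⟩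
end

section
/- Scaling relation between the primal and dual KKT systems. Let A ∈ R^{m×N}, b ∈ R^m, c ∈ R^N, ρ > 0, and for k = 1,…,p let H_k ∈ R^{n_k×N} and w_k ∈ R^{n_k}; set D = Σ_{k=1}^p H_kᵀ H_k. Then (x, y) ∈ R^N × R^m satisfies the dual-form KKT system D x + Aᵀ y = c − Σ_k H_kᵀ w_k and A x = −ρ^{-1} b if and only if (−x, −y) satisfies the primal-form KKT system D x̂ + Aᵀ ŷ = Σ_k H_kᵀ w_k − ρ^{-1} c′ and A x̂ = b′ with the rescaled data c′ = ρ c and b′ = ρ^{-1} b. Hence the two ADMM algorithms solve linear systems with the same coefficient matrix [[D, Aᵀ],[A, 0]] and are scaled versions of each other. -/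
open Matrix Finset

theorem mulVec_neg_add_mulVec_neg_eq_iff {R ι κ μ : Type*} [Ring R] [Fintype κ] [Fintype μ]
    (P : Matrix ι κ R) (Q : Matrix ι μ R) (u : κ → R) (v : μ → R) (r : ι → R) :
    P *ᵥ (-u) + Q *ᵥ (-v) = r ↔ P *ᵥ u + Q *ᵥ v = -r := by
  rw [mulVec_neg, mulVec_neg, ← neg_add, neg_eq_iff_eq_neg]

/-- **Scaling relation between the primal and dual KKT systems.** `(x, y)`
satisfies the dual-form KKT system
`D x + Aᵀ y = c − Σ_k H_kᵀ w_k`, `A x = −ρ⁻¹ b`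
if and only if `(−x, −y)` satisfies the primal-form KKT system
`D x̂ + Aᵀ ŷ = Σ_k H_kᵀ w_k − ρ⁻¹ c′`, `A x̂ = b′`
with the rescaled data `c′ = ρ c` and `b′ = ρ⁻¹ b`, where
`D = Σ_k H_kᵀ H_k`. Hence the two ADMM algorithms solve linear systems with
the same coefficient matrix `[[D, Aᵀ],[A, 0]]`. -/
theorem primal_dual_kkt_scaling {m N p : ℕ}
    (A : Matrix (Fin m) (Fin N) ℝ) (b : Fin m → ℝ) (c : Fin N → ℝ)
    (ρ : ℝ) (hρ : 0 < ρ)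
    (nk : Fin p → ℕ) (H : (k : Fin p) → Matrix (Fin (nk k)) (Fin N) ℝ)
    (w : (k : Fin p) → Fin (nk k) → ℝ)
    (x : Fin N → ℝ) (y : Fin m → ℝ) :
    ((∑ k, (H k)ᵀ * H k).mulVec x + Aᵀ.mulVec y =
          c - ∑ k, (H k)ᵀ.mulVec (w k) ∧
        A.mulVec x = -(ρ⁻¹ • b)) ↔
      ((∑ k, (H k)ᵀ * H k).mulVec (-x) + Aᵀ.mulVec (-y) =
          (∑ k, (H k)ᵀ.mulVec (w k)) - ρ⁻¹ • (ρ • c) ∧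
        A.mulVec (-x) = ρ⁻¹ • b) := by
  rw [inv_smul_smul₀ hρ.ne', mulVec_neg_add_mulVec_neg_eq_iff, neg_sub, mulVec_neg,
    neg_eq_iff_eq_neg]
end
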